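/- arXiv:1002.0042 — 11 statements merged into one kernel-verified Lean document; each statement's English description precedes it below -/
import Mathlib

section
/- Let F be a finite set and let P_θ, θ∈F, be probability measures on a measurable space 𝒳, all dominated by a σ-finite measure μ with densities p_θ. Let w be a probability measure on F with weights w_θ := w{θ}, all strictly positive, and define the test T(x) := argmax_{θ∈F} w_θ p_θ(x). Then for every convex function f:[0,∞)→ℝ with f(1)=0 and every probability measure Q on 𝒳, one has Σ_{θ∈F} w_θ D_f(P_θ||Q) ≥ W·f((1−r̄_w)/W) + (1−W)·f(r̄_w/(1−W)), where W := ∫_𝒳 w_{T(x)} dQ(x) and r̄_w := inf_T Σ_{θ∈F} w_θ P_θ{T ≠ θ} is the Bayes testing risk (infimum over all measurable maps T: 𝒳 → F). -/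
open MeasureTheory Real

/-- The `f`-divergence `D_f(P‖Q) = ∫ f(dP/dQ) dQ` (real-valued; meaningful when `P ≪ Q`
and the integrand is integrable, in which case it agrees with the usual definition;
otherwise the usual `D_f` is `+∞` and the lower bound is trivially true). -/
noncomputable def fDivR {X : Type*} [MeasurableSpace X] (f : ℝ → ℝ) (P Q : Measure X) : ℝ :=
  ∫ x, f ((P.rnDeriv Q x).toReal) ∂Q

/-- The Bayes testing risk `r̄_w = inf_T Σ_θ w_θ P_θ {T ≠ θ}`, the infimum being over all
measurable tests `T : X → F`. -/
noncomputable def bayesRiskW {X F : Type*} [MeasurableSpace X] [Fintype F]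
    (w : F → ℝ) (P : F → Measure X) : ℝ :=
  ⨅ T : {T : X → F // ∀ θ, MeasurableSet {x | T x = θ}},
    ∑ θ, w θ * (P θ {x | T.1 x ≠ θ}).toReal

lemma support_line {f : ℝ → ℝ} (hf : ConvexOn ℝ (Set.Ici 0) f) {m : ℝ} (hm : 0 < m) :
    ∃ c : ℝ, ∀ t : ℝ, 0 ≤ t → f m + c * (t - m) ≤ f t := by
  set S : Set ℝ := (fun a => (f m - f a) / (m - a)) '' Set.Ico 0 m with hS
  have hne : S.Nonempty := ⟨_, ⟨0, ⟨le_refl 0, hm⟩, rfl⟩⟩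
  have hub : ∀ y, m < y → ∀ s ∈ S, s ≤ (f y - f m) / (y - m) := by
    rintro y hy s ⟨a, ⟨ha0, ham⟩, rfl⟩
    exact hf.slope_mono_adjacent ha0 (le_of_lt (hm.trans hy)) ham hy
  have hbdd : BddAbove S := ⟨(f (m+1) - f m) / (m + 1 - m), fun s hs => hub (m+1) (by linarith) s hs⟩
  refine ⟨sSup S, fun t ht => ?_⟩
  rcases lt_trichotomy t m with h | h | h
  · have hle : (f m - f t) / (m - t) ≤ sSup S := le_csSup hbdd ⟨t, ⟨ht, h⟩, rfl⟩
    have hmt : 0 < m - t := by linarith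
    rw [div_le_iff₀ hmt] at hle
    nlinarith [hle]
  · subst h; simp
  · have hle : sSup S ≤ (f t - f m) / (t - m) := csSup_le hne (hub t h)
    have hmt : 0 < t - m := by linarith
    rw [le_div_iff₀ hmt] at hle
    nlinarith [hle]

/-- sum over indicators of fibers of a test collapses to the value at `T'' x`. -/
lemma indic_sum {X F : Type*} [Fintype F] (T'' : X → F) (g : F → X → ℝ) (x : X) :
    (∑ θ, Set.indicator {y | T'' y = θ} (g θ) x) = g (T'' x) x := by
  classical
  rw [Finset.sum_eq_single (T'' x)]
  · exact Set.indicator_of_mem (by simp) _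
  · intro θ _ hne
    have hx : x ∉ {y | T'' y = θ} := fun h => hne (Eq.symm h)
    exact Set.indicator_of_notMem hx _
  · exact fun h => absurd (Finset.mem_univ _) h

lemma test_integral {X F : Type*} [MeasurableSpace X] [Fintype F]
    (T'' : X → F) (hm : ∀ θ, MeasurableSet {y | T'' y = θ})
    (ν : Measure X) (g : F → X → ℝ) (hg : ∀ θ, Integrable (g θ) ν) :
    Integrable (fun x => g (T'' x) x) ν ∧
      ∫ x, g (T'' x) x ∂ν = ∑ θ, ∫ y in {y | T'' y = θ}, g θ y ∂ν := by
  have h1 : (fun x => g (T'' x) x) = fun x => ∑ θ, Set.indicator {y | T'' y = θ} (g θ) x :=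
    funext fun x => (indic_sum T'' g x).symm
  have h2 : ∀ θ, Integrable (Set.indicator {y | T'' y = θ} (g θ)) ν :=
    fun θ => (hg θ).indicator (hm θ)
  constructor
  · rw [h1]; exact integrable_finset_sum _ (fun θ _ => h2 θ)
  · rw [h1, integral_finset_sum _ (fun θ _ => h2 θ)]
    exact Finset.sum_congr rfl fun θ _ => integral_indicator (hm θ)

/-- Theorem 1, weighted form: for every convex `f` with `f 1 = 0` and every
probability measure `Q`, `Σ_θ w_θ D_f(P_θ‖Q) ≥ W f((1-r̄_w)/W) + (1-W) f(r̄_w/(1-W))`, where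
`W = ∫ w_{T x} dQ x` and `T x = argmax_θ w_θ p_θ x`. -/
theorem statement0 {X F : Type*} [MeasurableSpace X] [Fintype F] [Nonempty F]
    (μ : Measure X) [SigmaFinite μ]
    (p : F → X → ℝ) (hp_meas : ∀ θ, Measurable (p θ)) (hp_nonneg : ∀ θ x, 0 ≤ p θ x)
    (P : F → Measure X)
    (hP : ∀ θ, P θ = μ.withDensity (fun x => ENNReal.ofReal (p θ x)))
    (hPprob : ∀ θ, IsProbabilityMeasure (P θ))
    (w : F → ℝ) (hw_pos : ∀ θ, 0 < w θ) (hw_sum : ∑ θ, w θ = 1)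
    (T : X → F) (hT_meas : ∀ θ, MeasurableSet {x | T x = θ})
    (hT_max : ∀ x θ, w θ * p θ x ≤ w (T x) * p (T x) x)
    (f : ℝ → ℝ) (hf : ConvexOn ℝ (Set.Ici 0) f) (hf1 : f 1 = 0)
    (Q : Measure X) [IsProbabilityMeasure Q]
    (hAC : ∀ θ, P θ ≪ Q)
    (hInt : ∀ θ, Integrable (fun x => f ((P θ).rnDeriv Q x).toReal) Q)
    (W : ℝ) (hW : W = ∫ x, w (T x) ∂Q) :
    W * f ((1 - bayesRiskW w P) / W) + (1 - W) * f (bayesRiskW w P / (1 - W)) ≤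
      ∑ θ, w θ * fDivR f (P θ) Q := by
  classical
  -- the density ratios
  set r : F → X → ℝ := fun θ x => ((P θ).rnDeriv Q x).toReal with hr_def
  have hr_nonneg : ∀ θ x, 0 ≤ r θ x := fun θ x => ENNReal.toReal_nonneg
  have hr_int : ∀ θ, Integrable (r θ) Q := by
    intro θ; haveI := hPprob θ; exact Measure.integrable_toReal_rnDeriv
  have hr_total : ∀ θ, ∫ x, r θ x ∂Q = 1 := by
    intro θ; haveI := hPprob θ
    rw [hr_def]
    simp only []
    rw [Measure.integral_toReal_rnDeriv (hAC θ)]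
    simp [measure_univ]
  have hr_set : ∀ θ (S : Set X), ∫ x in S, r θ x ∂Q = (P θ S).toReal := by
    intro θ S; haveI := hPprob θ
    exact Measure.setIntegral_toReal_rnDeriv (hAC θ) S
  -- densities wrt μ
  have hp_int : ∀ θ, Integrable (p θ) μ := by
    intro θ
    refine ⟨(hp_meas θ).aestronglyMeasurable, ?_⟩
    rw [hasFiniteIntegral_iff_ofReal (ae_of_all _ (hp_nonneg θ))]
    have : ∫⁻ x, ENNReal.ofReal (p θ x) ∂μ = P θ Set.univ := by
      rw [hP θ, withDensity_apply _ MeasurableSet.univ, setLIntegral_univ]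
    rw [this]
    haveI := hPprob θ
    simp [measure_univ]
  have hPS : ∀ θ (S : Set X), MeasurableSet S → (P θ S).toReal = ∫ x in S, p θ x ∂μ := by
    intro θ S hS
    rw [hP θ, withDensity_apply _ hS,
      integral_eq_lintegral_of_nonneg_ae (ae_of_all _ fun x => hp_nonneg θ x)
        (hp_meas θ).aestronglyMeasurable]
  -- risk of arbitrary test as an integral over μ
  have hrisk_val : ∀ (T'' : X → F), (∀ θ, MeasurableSet {y | T'' y = θ}) →
      ∫ x, w (T'' x) * p (T'' x) x ∂μ = ∑ θ, w θ * (P θ {x | T'' x = θ}).toReal := by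
    intro T'' hm
    have := test_integral T'' hm μ (fun θ x => w θ * p θ x)
      (fun θ => (hp_int θ).const_mul (w θ))
    rw [this.2]
    refine Finset.sum_congr rfl fun θ _ => ?_
    rw [integral_const_mul, hPS θ _ (hm θ)]
  have hrisk_int : ∀ (T'' : X → F), (∀ θ, MeasurableSet {y | T'' y = θ}) →
      Integrable (fun x => w (T'' x) * p (T'' x) x) μ := by
    intro T'' hm
    exact (test_integral T'' hm μ (fun θ x => w θ * p θ x)
      (fun θ => (hp_int θ).const_mul (w θ))).1
  -- complement identity
  have hcompl : ∀ (T'' : X → F), (∀ θ, MeasurableSet {y | T'' y = θ}) → ∀ θ,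
      (P θ {x | T'' x ≠ θ}).toReal = 1 - (P θ {x | T'' x = θ}).toReal := by
    intro T'' hm θ
    haveI := hPprob θ
    have hset : {x | T'' x ≠ θ} = {x | T'' x = θ}ᶜ := rfl
    have h1 : P θ {x | T'' x = θ} + P θ ({x | T'' x = θ}ᶜ) = 1 := by
      rw [measure_add_measure_compl (hm θ), measure_univ]
    have h2 : (P θ {x | T'' x = θ}).toReal + (P θ ({x | T'' x = θ}ᶜ)).toReal = 1 := by
      rw [← ENNReal.toReal_add (measure_ne_top _ _) (measure_ne_top _ _), h1]; simp
    rw [hset]; linarith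
  -- the Bayes risk equals the risk of T
  set R : ℝ := ∑ θ, w θ * (P θ {x | T x ≠ θ}).toReal with hR_def
  have hR_nonneg : 0 ≤ R :=
    Finset.sum_nonneg fun θ _ => mul_nonneg (hw_pos θ).le ENNReal.toReal_nonneg
  have hrisk_eq : ∀ (T'' : X → F), (∀ θ, MeasurableSet {y | T'' y = θ}) →
      ∑ θ, w θ * (P θ {x | T'' x ≠ θ}).toReal
        = 1 - ∫ x, w (T'' x) * p (T'' x) x ∂μ := by
    intro T'' hm
    rw [hrisk_val T'' hm, ← hw_sum, ← Finset.sum_sub_distrib]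
    refine Finset.sum_congr rfl fun θ _ => ?_
    rw [hcompl T'' hm θ]; ring
  have hRT : R = 1 - ∫ x, w (T x) * p (T x) x ∂μ := hrisk_eq T hT_meas
  haveI : Nonempty {T : X → F // ∀ θ, MeasurableSet {x | T x = θ}} := ⟨⟨T, hT_meas⟩⟩
  have hRisk : bayesRiskW w P = R := by
    apply le_antisymm
    · have hbdd : BddBelow (Set.range fun T' : {T : X → F // ∀ θ, MeasurableSet {x | T x = θ}} =>
          ∑ θ, w θ * (P θ {x | T'.1 x ≠ θ}).toReal) := by
        refine ⟨0, ?_⟩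
        rintro y ⟨T', rfl⟩
        exact Finset.sum_nonneg fun θ _ => mul_nonneg (hw_pos θ).le ENNReal.toReal_nonneg
      exact ciInf_le hbdd ⟨T, hT_meas⟩
    · refine le_ciInf fun T' => ?_
      rw [hrisk_eq T'.1 T'.2, hRT]
      have hmono : ∫ x, w (T'.1 x) * p (T'.1 x) x ∂μ ≤ ∫ x, w (T x) * p (T x) x ∂μ :=
        integral_mono (hrisk_int T'.1 T'.2) (hrisk_int T hT_meas) (fun x => hT_max x (T'.1 x))
      linarith
  rw [hRisk]
  -- rewrite the RHS as one integral
  have hsum_div : ∑ θ, w θ * fDivR f (P θ) Q = ∫ x, ∑ θ, w θ * f (r θ x) ∂Q := by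
    rw [integral_finset_sum _ (fun θ _ => ((hInt θ).const_mul (w θ)))]
    refine Finset.sum_congr rfl fun θ _ => ?_
    rw [integral_const_mul]; rfl
  rw [hsum_div]
  have hsum_int : Integrable (fun x => ∑ θ, w θ * f (r θ x)) Q :=
    integrable_finset_sum _ (fun θ _ => (hInt θ).const_mul (w θ))
  -- integrability of x ↦ w (T x)
  have hwT_int : Integrable (fun x => w (T x)) Q :=
    (test_integral T hT_meas Q (fun θ _ => w θ) (fun θ => integrable_const _)).1
  -- u and its integral
  have hu_int : Integrable (fun x => w (T x) * r (T x) x) Q :=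
    (test_integral T hT_meas Q (fun θ x => w θ * r θ x)
      (fun θ => (hr_int θ).const_mul (w θ))).1
  set A : ℝ := ∫ x, w (T x) * r (T x) x ∂Q with hA_def
  have hA_val : A = 1 - R := by
    rw [hA_def, (test_integral T hT_meas Q (fun θ x => w θ * r θ x)
      (fun θ => (hr_int θ).const_mul (w θ))).2]
    have : ∀ θ, ∫ y in {y | T y = θ}, w θ * r θ y ∂Q = w θ * (P θ {y | T y = θ}).toReal := by
      intro θ; rw [integral_const_mul, hr_set θ _]
    rw [Finset.sum_congr rfl fun θ _ => this θ]
    rw [hR_def, ← hw_sum, ← Finset.sum_sub_distrib]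
    refine Finset.sum_congr rfl fun θ _ => ?_
    rw [hcompl T hT_meas θ]; ring
  have hA_nonneg : 0 ≤ A :=
    integral_nonneg fun x => mul_nonneg (hw_pos _).le (hr_nonneg _ _)
  -- b and its integral
  set b : X → ℝ := fun x => ∑ θ ∈ Finset.univ.erase (T x), w θ * r θ x with hb_def
  have hb_eq : ∀ x, b x = (∑ θ, w θ * r θ x) - w (T x) * r (T x) x := by
    intro x
    have h' : w (T x) * r (T x) x + ∑ θ ∈ Finset.univ.erase (T x), w θ * r θ x
        = ∑ θ, w θ * r θ x :=
      Finset.add_sum_erase Finset.univ (fun θ => w θ * r θ x) (Finset.mem_univ (T x))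
    rw [hb_def]; dsimp only; linarith
  have htot_int : Integrable (fun x => ∑ θ, w θ * r θ x) Q :=
    integrable_finset_sum _ (fun θ _ => (hr_int θ).const_mul (w θ))
  have hb_int : Integrable b Q := by
    have : b = fun x => (∑ θ, w θ * r θ x) - w (T x) * r (T x) x := funext hb_eq
    rw [this]; exact htot_int.sub hu_int
  have hb_nonneg : ∀ x, 0 ≤ b x :=
    fun x => Finset.sum_nonneg fun θ _ => mul_nonneg (hw_pos θ).le (hr_nonneg _ _)
  have hB_val : ∫ x, b x ∂Q = R := by
    have h1 : ∫ x, (∑ θ, w θ * r θ x) ∂Q = 1 := by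
      rw [integral_finset_sum _ (fun θ _ => (hr_int θ).const_mul (w θ))]
      rw [← hw_sum]
      refine Finset.sum_congr rfl fun θ _ => ?_
      rw [integral_const_mul, hr_total θ, mul_one]
    have h2 : b = fun x => (∑ θ, w θ * r θ x) - w (T x) * r (T x) x := funext hb_eq
    rw [h2, integral_sub htot_int hu_int, h1, ← hA_def, hA_val]; ring
  -- case on the cardinality of F
  rcases le_or_gt (Fintype.card F) 1 with hcard | hcard
  · -- singleton case
    have hcard1 : Fintype.card F = 1 := le_antisymm hcard Fintype.card_pos
    obtain ⟨θ0, hθ0⟩ := Fintype.card_eq_one_iff.mp hcard1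
    have hw1 : w θ0 = 1 := by
      rw [← hw_sum]
      symm
      apply Finset.sum_eq_single_of_mem θ0 (Finset.mem_univ θ0)
      exact fun b _ hb => (hb (hθ0 b)).elim
    have hW1 : W = 1 := by
      rw [hW]
      have : (fun x => w (T x)) = fun _ => (1 : ℝ) := funext fun x => by rw [hθ0 (T x), hw1]
      rw [this]; simp
    have hR0 : R = 0 := by
      rw [hR_def]
      apply Finset.sum_eq_zero
      intro θ _
      have : {x | T x ≠ θ} = ∅ := by
        ext x; simp [hθ0 (T x), hθ0 θ]
      rw [this]; simp
    rw [hW1, hR0]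
    simp only [sub_zero, sub_self, zero_mul, add_zero, div_one, one_mul]
    -- need : f 1 ≤ ∫ x, ∑ θ, w θ * f (r θ x) ∂Q
    obtain ⟨c, hc⟩ := support_line hf one_pos
    have hI1 : Integrable (fun x => (∑ θ, w θ * r θ x) - 1) Q :=
      htot_int.sub (integrable_const 1)
    have hI2 : Integrable (fun x => c * ((∑ θ, w θ * r θ x) - 1)) Q := hI1.const_mul c
    have hline_int : Integrable (fun x => f 1 + c * ((∑ θ, w θ * r θ x) - 1)) Q :=
      (integrable_const _).add hI2
    calc f 1 ≤ ∫ x, (f 1 + c * ((∑ θ, w θ * r θ x) - 1)) ∂Q := by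
          rw [integral_add (integrable_const (f 1)) hI2, integral_const_mul,
            integral_sub htot_int (integrable_const 1),
            integral_finset_sum _ (fun θ _ => (hr_int θ).const_mul (w θ))]
          have : ∑ θ, ∫ x, w θ * r θ x ∂Q = 1 := by
            rw [← hw_sum]
            exact Finset.sum_congr rfl fun θ _ => by rw [integral_const_mul, hr_total θ, mul_one]
          simp [this]
      _ ≤ ∫ x, ∑ θ, w θ * f (r θ x) ∂Q := by
          apply integral_mono hline_int hsum_int
          intro x
          show f 1 + c * ((∑ θ, w θ * r θ x) - 1) ≤ ∑ θ, w θ * f (r θ x)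
          have hsum1 : ∑ θ, w θ * r θ x = w θ0 * r θ0 x := by
            apply Finset.sum_eq_single_of_mem θ0 (Finset.mem_univ θ0)
            exact fun b _ hb => (hb (hθ0 b)).elim
          have hsum2 : ∑ θ, w θ * f (r θ x) = w θ0 * f (r θ0 x) := by
            apply Finset.sum_eq_single_of_mem θ0 (Finset.mem_univ θ0)
            exact fun b _ hb => (hb (hθ0 b)).elim
          rw [hsum1, hsum2, hw1, one_mul, one_mul]
          exact hc _ (hr_nonneg θ0 x)
  · -- main case : at least two elements
    have hwlt1 : ∀ θ, w θ < 1 := by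
      intro θ
      obtain ⟨θ', hθ'⟩ := Fintype.exists_ne_of_one_lt_card hcard θ
      have h1 : w θ + ∑ θ'' ∈ Finset.univ.erase θ, w θ'' = 1 := by
        rw [Finset.add_sum_erase _ _ (Finset.mem_univ θ), hw_sum]
      have h2 : w θ' ≤ ∑ θ'' ∈ Finset.univ.erase θ, w θ'' :=
        Finset.single_le_sum (fun i _ => (hw_pos i).le)
          (Finset.mem_erase.mpr ⟨hθ', Finset.mem_univ θ'⟩)
      linarith [hw_pos θ']
    obtain ⟨θm, -, hθm⟩ := Finset.exists_min_image Finset.univ w Finset.univ_nonempty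
    obtain ⟨θM, -, hθM⟩ := Finset.exists_max_image Finset.univ w Finset.univ_nonempty
    have hW_lb : w θm ≤ W := by
      rw [hW]
      calc w θm = ∫ _, w θm ∂Q := by simp
        _ ≤ ∫ x, w (T x) ∂Q :=
          integral_mono (integrable_const _) hwT_int (fun x => hθm _ (Finset.mem_univ _))
    have hW_ub : W ≤ w θM := by
      rw [hW]
      calc ∫ x, w (T x) ∂Q ≤ ∫ _, w θM ∂Q :=
          integral_mono hwT_int (integrable_const _) (fun x => hθM _ (Finset.mem_univ _))
        _ = w θM := by simp
    have hW_pos : 0 < W := lt_of_lt_of_le (hw_pos θm) hW_lb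
    have hW_lt1 : W < 1 := lt_of_le_of_lt hW_ub (hwlt1 θM)
    set m1 : ℝ := (1 - R) / W with hm1_def
    set m2 : ℝ := R / (1 - W) with hm2_def
    have hm1A : m1 = A / W := by rw [hm1_def, hA_val]
    -- supporting lines (possibly only a.e.)
    have H1 : ∃ c1 : ℝ, ∀ᵐ x ∂Q, f m1 + c1 * (r (T x) x - m1) ≤ f (r (T x) x) := by
      rcases eq_or_lt_of_le hA_nonneg with hA0 | hA0
      · refine ⟨0, ?_⟩
        have hu0 : (fun x => w (T x) * r (T x) x) =ᵐ[Q] 0 :=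
          (integral_eq_zero_iff_of_nonneg
            (fun x => mul_nonneg (hw_pos _).le (hr_nonneg _ _)) hu_int).mp
            (by rw [← hA_def]; exact hA0.symm)
        have hm10 : m1 = 0 := by rw [hm1A, ← hA0, zero_div]
        filter_upwards [hu0] with x hx
        have : r (T x) x = 0 := by
          have := (mul_eq_zero.mp hx).resolve_left (ne_of_gt (hw_pos (T x)))
          exact this
        rw [this, hm10]; simp
      · have hm1_pos : 0 < m1 := by
          rw [hm1A]; exact div_pos hA0 hW_pos
        obtain ⟨c1, hc1⟩ := support_line hf hm1_pos
        exact ⟨c1, ae_of_all _ fun x => hc1 _ (hr_nonneg _ _)⟩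
    have H2 : ∃ c2 : ℝ, ∀ᵐ x ∂Q, ∀ θ, θ ≠ T x → f m2 + c2 * (r θ x - m2) ≤ f (r θ x) := by
      rcases eq_or_lt_of_le hR_nonneg with hR0 | hR0
      · refine ⟨0, ?_⟩
        have hb0 : b =ᵐ[Q] 0 :=
          (integral_eq_zero_iff_of_nonneg hb_nonneg hb_int).mp (by rw [hB_val]; exact hR0.symm)
        have hm20 : m2 = 0 := by rw [hm2_def, ← hR0, zero_div]
        filter_upwards [hb0] with x hx θ hθ
        have hzero : ∀ θ' ∈ Finset.univ.erase (T x), w θ' * r θ' x = 0 := by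
          have := (Finset.sum_eq_zero_iff_of_nonneg
            (fun θ' _ => mul_nonneg (hw_pos θ').le (hr_nonneg θ' x))).mp hx
          exact this
        have : r θ x = 0 := by
          have h := hzero θ (Finset.mem_erase.mpr ⟨hθ, Finset.mem_univ θ⟩)
          exact (mul_eq_zero.mp h).resolve_left (ne_of_gt (hw_pos θ))
        rw [this, hm20]; simp
      · have hm2_pos : 0 < m2 := div_pos hR0 (by linarith)
        obtain ⟨c2, hc2⟩ := support_line hf hm2_pos
        exact ⟨c2, ae_of_all _ fun x θ _ => hc2 _ (hr_nonneg _ _)⟩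
    obtain ⟨c1, hc1⟩ := H1
    obtain ⟨c2, hc2⟩ := H2
    -- the pointwise inequality
    set g : X → ℝ := fun x =>
      (f m1 - c1 * m1 - f m2 + c2 * m2) * w (T x) + c1 * (w (T x) * r (T x) x)
        + c2 * b x + (f m2 - c2 * m2) with hg_def
    have hpoint : ∀ᵐ x ∂Q, g x ≤ ∑ θ, w θ * f (r θ x) := by
      filter_upwards [hc1, hc2] with x h1 h2
      have hsw : ∑ θ ∈ Finset.univ.erase (T x), w θ = 1 - w (T x) := by
        have := Finset.add_sum_erase Finset.univ w (Finset.mem_univ (T x))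
        linarith [hw_sum]
      have hsplit : ∑ θ, w θ * f (r θ x)
          = w (T x) * f (r (T x) x) + ∑ θ ∈ Finset.univ.erase (T x), w θ * f (r θ x) :=
        (Finset.add_sum_erase _ _ (Finset.mem_univ (T x))).symm
      have t1 : w (T x) * (f m1 + c1 * (r (T x) x - m1)) ≤ w (T x) * f (r (T x) x) :=
        mul_le_mul_of_nonneg_left h1 (hw_pos _).le
      have t2 : ∑ θ ∈ Finset.univ.erase (T x), w θ * (f m2 + c2 * (r θ x - m2))
          ≤ ∑ θ ∈ Finset.univ.erase (T x), w θ * f (r θ x) :=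
        Finset.sum_le_sum fun θ hθ =>
          mul_le_mul_of_nonneg_left (h2 θ (Finset.mem_erase.mp hθ).1) (hw_pos θ).le
      have t3 : ∑ θ ∈ Finset.univ.erase (T x), w θ * (f m2 + c2 * (r θ x - m2))
          = (f m2 - c2 * m2) * (1 - w (T x)) + c2 * b x := by
        calc ∑ θ ∈ Finset.univ.erase (T x), w θ * (f m2 + c2 * (r θ x - m2))
            = ∑ θ ∈ Finset.univ.erase (T x),
              ((f m2 - c2 * m2) * w θ + c2 * (w θ * r θ x)) :=
              Finset.sum_congr rfl fun θ _ => by ring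
          _ = (f m2 - c2 * m2) * (∑ θ ∈ Finset.univ.erase (T x), w θ)
              + c2 * (∑ θ ∈ Finset.univ.erase (T x), w θ * r θ x) := by
              rw [Finset.sum_add_distrib, Finset.mul_sum, Finset.mul_sum]
          _ = (f m2 - c2 * m2) * (1 - w (T x)) + c2 * b x := by rw [hsw]
      have hgx : g x = w (T x) * (f m1 + c1 * (r (T x) x - m1))
          + ((f m2 - c2 * m2) * (1 - w (T x)) + c2 * b x) := by
        rw [hg_def]; ring
      rw [hsplit, hgx]
      linarith [t1, t2, t3.le, t3.ge]
    -- integrate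
    have hI_a : Integrable (fun x => (f m1 - c1 * m1 - f m2 + c2 * m2) * w (T x)) Q :=
      hwT_int.const_mul _
    have hI_b : Integrable (fun x => c1 * (w (T x) * r (T x) x)) Q := hu_int.const_mul c1
    have hI_c : Integrable (fun x => c2 * b x) Q := hb_int.const_mul c2
    have hI_ab : Integrable (fun x => (f m1 - c1 * m1 - f m2 + c2 * m2) * w (T x)
        + c1 * (w (T x) * r (T x) x)) Q := hI_a.add hI_b
    have hI_abc : Integrable (fun x => (f m1 - c1 * m1 - f m2 + c2 * m2) * w (T x)
        + c1 * (w (T x) * r (T x) x) + c2 * b x) Q := hI_ab.add hI_c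
    have hg_int : Integrable g Q := by
      rw [hg_def]
      exact hI_abc.add (integrable_const _)
    have hg_val : ∫ x, g x ∂Q = (f m1 - c1 * m1 - f m2 + c2 * m2) * W + c1 * A
        + c2 * R + (f m2 - c2 * m2) := by
      simp only [hg_def]
      rw [integral_add hI_abc (integrable_const _), integral_add hI_ab hI_c,
        integral_add hI_a hI_b,
        integral_const_mul, integral_const_mul, integral_const_mul, ← hW, ← hA_def, hB_val]
      simp
    have e1 : m1 * W = A := by rw [hm1A, div_mul_cancel₀ _ (ne_of_gt hW_pos)]
    have e2 : m2 * (1 - W) = R := by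
      rw [hm2_def, div_mul_cancel₀ _ (by linarith : (1 : ℝ) - W ≠ 0)]
    calc W * f m1 + (1 - W) * f m2
        = ∫ x, g x ∂Q := by
          rw [hg_val]
          linear_combination (c1 : ℝ) * e1 + c2 * e2
      _ ≤ ∫ x, ∑ θ, w θ * f (r θ x) ∂Q := integral_mono_ae hg_int hsum_int hpoint
end

section
/- Let F be a finite set of cardinality N and let P_θ, θ∈F, be probability measures on a measurable space 𝒳, all dominated by a σ-finite measure μ with densities p_θ. Then for every convex function f:[0,∞)→ℝ with f(1)=0 and every probability measure Q on 𝒳, one has Σ_{θ∈F} D_f(P_θ||Q) ≥ f(N(1−r̄)) + (N−1)·f(N r̄/(N−1)), where r̄ := inf_T (1/N) Σ_{θ∈F} P_θ{T ≠ θ} is the uniform-prior Bayes testing risk (infimum over all measurable maps T: 𝒳 → F). -/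
/-!
Take a maximum-likelihood test `T` for the densities `dP_θ/dQ`; it attains the Bayes risk, so
with `A_θ = {T = θ}` one has `Σ_θ P_θ(A_θ) = N(1 - r̄)`, `Σ_θ P_θ(A_θᶜ) = N r̄`, `Σ_θ Q(A_θ) = 1`
and `Σ_θ Q(A_θᶜ) = N - 1`. Jensen's inequality on `A_θ` and on `A_θᶜ` bounds `D_f(P_θ‖Q)` below
by `Q(A_θ) f(P_θ(A_θ)/Q(A_θ)) + Q(A_θᶜ) f(P_θ(A_θᶜ)/Q(A_θᶜ))`. Summing over `θ` and using that
the perspective `(q, p) ↦ q f(p/q)` is subadditive gives the bound.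
-/

open MeasureTheory Real

/-- The uniform-prior Bayes testing risk `r̄ = inf_T (1/N) Σ_θ P_θ {T ≠ θ}`, the infimum
being over all measurable tests `T : X → F`. -/
noncomputable def bayesRisk {X F : Type*} [MeasurableSpace X] [Fintype F]
    (P : F → Measure X) : ℝ :=
  ⨅ T : {T : X → F // ∀ θ, MeasurableSet {x | T x = θ}},
    (Fintype.card F : ℝ)⁻¹ * ∑ θ, (P θ {x | T.1 x ≠ θ}).toReal

open Set

/-- Because `p / 0 = 0`, `perspective f 0 p = 0` for every `p`, which is why the sums below need
`q = 0 → p = 0`. -/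
noncomputable def perspective (f : ℝ → ℝ) (q p : ℝ) : ℝ := q * f (p / q)

lemma ConvexOn.add_mul_sub_le_of_mem_interior {S : Set ℝ} {f : ℝ → ℝ} (hf : ConvexOn ℝ S f)
    {m t : ℝ} (hm : m ∈ interior S) (ht : t ∈ S) :
    f m + derivWithin f (Ioi m) m * (t - m) ≤ f t := by
  rcases lt_trichotomy t m with htm | rfl | hmt
  · have h := (hf.slope_le_leftDeriv_of_mem_interior ht hm htm).trans
      (hf.leftDeriv_le_rightDeriv_of_mem_interior hm)
    rw [slope_def_field, div_le_iff₀ (sub_pos.2 htm)] at h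
    linarith
  · simp
  · have h := hf.rightDeriv_le_slope_of_mem_interior hm ht hmt
    rw [slope_def_field, le_div_iff₀ (sub_pos.2 hmt)] at h
    linarith

lemma ConvexOn.perspective_integral_le {X : Type*} [MeasurableSpace X] {ν : Measure X}
    [IsFiniteMeasure ν] {f : ℝ → ℝ} (hf : ConvexOn ℝ (Ici 0) f) {g : X → ℝ}
    (hg0 : ∀ x, 0 ≤ g x) (hg : Integrable g ν) (hfg : Integrable (fun x => f (g x)) ν) :
    perspective f (ν.real univ) (∫ x, g x ∂ν) ≤ ∫ x, f (g x) ∂ν := by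
  rw [perspective]
  rcases (integral_nonneg (f := g) hg0).eq_or_lt with hI | hI
  · have hg_ae : g =ᵐ[ν] 0 := (integral_eq_zero_iff_of_nonneg hg0 hg).1 hI.symm
    have hfg0 : ∫ x, f (g x) ∂ν = ∫ _, f 0 ∂ν := integral_congr_ae <| hg_ae.fun_comp f
    rw [hfg0, ← hI, zero_div, integral_const, smul_eq_mul]
  · have hw : 0 < ν.real univ := by
      refine measureReal_nonneg.lt_of_ne fun h => ?_
      rw [eq_comm, measureReal_eq_zero_iff, Measure.measure_univ_eq_zero] at h
      simp [h] at hI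
    set m := (∫ x, g x ∂ν) / ν.real univ
    have hm : m ∈ interior (Ici (0 : ℝ)) := by
      rw [interior_Ici]
      exact div_pos hI hw
    have hIm : ∫ x, g x ∂ν = m * ν.real univ := (div_mul_cancel₀ _ hw.ne').symm
    set c := derivWithin f (Ioi m) m
    have hlin : Integrable (fun x => c * (g x - m)) ν := (hg.sub (integrable_const m)).const_mul c
    calc ν.real univ * f m = ∫ x, f m + c * (g x - m) ∂ν := by
          rw [integral_add (integrable_const _) hlin,
            integral_const_mul, integral_sub hg (integrable_const m), integral_const,
            integral_const, smul_eq_mul, smul_eq_mul, hIm]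
          ring
      _ ≤ ∫ x, f (g x) ∂ν :=
          integral_mono ((integrable_const _).add hlin) hfg fun x =>
            hf.add_mul_sub_le_of_mem_interior hm (hg0 x)

lemma ConvexOn.perspective_sum_le {ι : Type*} {f : ℝ → ℝ} (hf : ConvexOn ℝ (Ici 0) f)
    {t : Finset ι} {q p : ι → ℝ} (hq : ∀ i ∈ t, 0 ≤ q i) (hp : ∀ i ∈ t, 0 ≤ p i)
    (hpq : ∀ i ∈ t, q i = 0 → p i = 0) :
    perspective f (∑ i ∈ t, q i) (∑ i ∈ t, p i) ≤ ∑ i ∈ t, perspective f (q i) (p i) := by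
  have hqp : ∀ i ∈ t, q i * (p i / q i) = p i := fun i hi => by
    rcases eq_or_ne (q i) 0 with h | h
    · simp [h, hpq i hi h]
    · field_simp
  rcases (Finset.sum_nonneg hq).eq_or_lt with h0 | hpos
  · have hq0 : ∀ i ∈ t, q i = 0 := (Finset.sum_eq_zero_iff_of_nonneg hq).1 h0.symm
    rw [← h0, Finset.sum_eq_zero fun i hi =>
      show perspective f (q i) (p i) = 0 by simp [perspective, hq0 i hi]]
    simp [perspective]
  · have h := hf.map_centerMass_le hq hpos fun i hi => div_nonneg (hp i hi) (hq i hi)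
    simp only [Finset.centerMass, smul_eq_mul, Function.comp_apply,
      Finset.sum_congr rfl hqp] at h
    rw [← div_eq_inv_mul, ← div_eq_inv_mul, le_div_iff₀ hpos, mul_comm] at h
    exact h

lemma perspective_add_perspective_compl_le_fDivR {X : Type*} [MeasurableSpace X] {f : ℝ → ℝ}
    (hf : ConvexOn ℝ (Ici 0) f) {P Q : Measure X} [IsFiniteMeasure P] [IsFiniteMeasure Q]
    (hPQ : P ≪ Q) (hInt : Integrable (fun x => f (P.rnDeriv Q x).toReal) Q) {A : Set X}
    (hA : MeasurableSet A) :
    perspective f (Q.real A) (P.real A) + perspective f (Q.real Aᶜ) (P.real Aᶜ) ≤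
      fDivR f P Q := by
  have cell (C : Set X) :
      perspective f (Q.real C) (P.real C) ≤ ∫ x in C, f (P.rnDeriv Q x).toReal ∂Q := by
    rw [← measureReal_restrict_apply_univ, ← Measure.setIntegral_toReal_rnDeriv hPQ]
    exact hf.perspective_integral_le (fun _ => ENNReal.toReal_nonneg)
      Measure.integrable_toReal_rnDeriv.restrict hInt.restrict
  rw [fDivR, ← integral_add_compl hA hInt]
  exact add_le_add (cell A) (cell Aᶜ)

lemma eval_test_eq_sum_indicator {X F : Type*} [Fintype F] (g : F → X → ℝ) (T : X → F) :
    (fun x => g (T x) x) = fun x => ∑ θ, {x | T x = θ}.indicator (g θ) x := by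
  classical
  ext x
  simp [indicator_apply]

section Tests

variable {X F : Type*} [MeasurableSpace X] [Fintype F]

lemma exists_measurable_argmax [Nonempty F] {ρ : F → X → ℝ} (hρ : ∀ θ, Measurable (ρ θ)) :
    ∃ T : X → F, (∀ θ, MeasurableSet {x | T x = θ}) ∧ ∀ x θ, ρ θ x ≤ ρ (T x) x := by
  classical
  let _ : LinearOrder F := LinearOrder.lift' _ (Fintype.equivFin F).injective
  let argmax (x : X) : Finset F := {θ | ∀ θ', ρ θ' x ≤ ρ θ x}
  have hne (x : X) : (argmax x).Nonempty := by
    obtain ⟨θ, -, hθ⟩ := Finset.exists_max_image Finset.univ (ρ · x) Finset.univ_nonempty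
    exact ⟨θ, by simpa [argmax] using hθ⟩
  have hmem (x : X) : (argmax x).min' (hne x) ∈ argmax x := Finset.min'_mem _ _
  simp only [argmax, Finset.mem_filter, Finset.mem_univ, true_and] at hmem
  -- Breaking ties towards the smallest index makes each fibre measurable.
  have hfiber (θ : F) : {x | (argmax x).min' (hne x) = θ} =
      (⋂ θ', {x | ρ θ' x ≤ ρ θ x}) ∩ ⋂ θ' < θ, {x | ρ θ' x < ρ θ x} := by
    ext x
    simp only [mem_ofPred_eq, mem_inter_iff, mem_iInter]
    constructor
    · rintro rfl
      refine ⟨hmem x, fun θ' hθ' => lt_of_not_ge fun h => ?_⟩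
      exact hθ'.not_ge <| Finset.min'_le _ _ <| by
        simpa [argmax] using fun θ'' => (hmem x θ'').trans h
    · rintro ⟨hθ, hlt⟩
      refine le_antisymm (Finset.min'_le _ _ (by simpa [argmax] using hθ)) (not_lt.1 fun h => ?_)
      exact (hlt _ h).not_ge (hmem x θ)
  refine ⟨fun x => (argmax x).min' (hne x), fun θ => ?_, fun x θ => hmem x θ⟩
  rw [hfiber]
  exact (MeasurableSet.iInter fun θ' => measurableSet_le (hρ θ') (hρ θ)).inter
    (MeasurableSet.iInter fun θ' => .iInter fun _ => measurableSet_lt (hρ θ') (hρ θ))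

variable {ν : Measure X} {g : F → X → ℝ} {T : X → F}

lemma integrable_eval_test (hT : ∀ θ, MeasurableSet {x | T x = θ})
    (hg : ∀ θ, Integrable (g θ) ν) : Integrable (fun x => g (T x) x) ν := by
  rw [eval_test_eq_sum_indicator]
  exact integrable_finsetSum _ fun θ _ => (hg θ).indicator (hT θ)

lemma integral_eval_test (hT : ∀ θ, MeasurableSet {x | T x = θ})
    (hg : ∀ θ, Integrable (g θ) ν) :
    ∫ x, g (T x) x ∂ν = ∑ θ, ∫ x in {x | T x = θ}, g θ x ∂ν := by
  rw [eval_test_eq_sum_indicator, integral_finsetSum _ fun θ _ => (hg θ).indicator (hT θ)]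
  exact Finset.sum_congr rfl fun θ _ => integral_indicator (hT θ)

variable {P : F → Measure X} [∀ θ, IsProbabilityMeasure (P θ)]

lemma sum_measureReal_ne_eq_card_sub (hT : ∀ θ, MeasurableSet {x | T x = θ}) :
    ∑ θ, (P θ).real {x | T x ≠ θ} = Fintype.card F - ∑ θ, (P θ).real {x | T x = θ} := by
  simp_rw [← compl_ofPred, probReal_compl_eq_one_sub (hT _), Finset.sum_sub_distrib]
  simp

lemma sum_measureReal_eq_integral_rnDeriv (Q : Measure X) [IsFiniteMeasure Q]
    (hPQ : ∀ θ, P θ ≪ Q) (hT : ∀ θ, MeasurableSet {x | T x = θ}) :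
    ∑ θ, (P θ).real {x | T x = θ} = ∫ x, ((P (T x)).rnDeriv Q x).toReal ∂Q := by
  rw [integral_eval_test hT fun θ => Measure.integrable_toReal_rnDeriv]
  exact Finset.sum_congr rfl fun θ _ => (Measure.setIntegral_toReal_rnDeriv (hPQ θ) _).symm

lemma bayesRisk_eq_of_forall_rnDeriv_le [Nonempty F] (Q : Measure X) [IsFiniteMeasure Q]
    (hPQ : ∀ θ, P θ ≪ Q) (hT : ∀ θ, MeasurableSet {x | T x = θ})
    (hmax : ∀ x θ, ((P θ).rnDeriv Q x).toReal ≤ ((P (T x)).rnDeriv Q x).toReal) :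
    bayesRisk P = (Fintype.card F : ℝ)⁻¹ * ∑ θ, (P θ).real {x | T x ≠ θ} := by
  have hopt (T' : X → F) (hT' : ∀ θ, MeasurableSet {x | T' x = θ}) :
      ∑ θ, (P θ).real {x | T x ≠ θ} ≤ ∑ θ, (P θ).real {x | T' x ≠ θ} := by
    rw [sum_measureReal_ne_eq_card_sub hT, sum_measureReal_ne_eq_card_sub hT',
      sub_le_sub_iff_left, sum_measureReal_eq_integral_rnDeriv Q hPQ hT,
      sum_measureReal_eq_integral_rnDeriv Q hPQ hT']
    have hρ θ : Integrable (fun x => ((P θ).rnDeriv Q x).toReal) Q :=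
      Measure.integrable_toReal_rnDeriv
    exact integral_mono (integrable_eval_test hT' hρ) (integrable_eval_test hT hρ)
      fun x => hmax x (T' x)
  have : Nonempty {T : X → F // ∀ θ, MeasurableSet {x | T x = θ}} := ⟨⟨T, hT⟩⟩
  refine ciInf_eq_of_forall_ge_of_forall_gt_exists_lt (fun T' => ?_) fun r hr => ⟨⟨T, hT⟩, hr⟩
  exact mul_le_mul_of_nonneg_left (hopt T'.1 T'.2) (by positivity)

end Tests

theorem statement1_general {X F : Type*} [MeasurableSpace X] [Fintype F] [Nonempty F]
    (P : F → Measure X) (hPprob : ∀ θ, IsProbabilityMeasure (P θ))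
    (f : ℝ → ℝ) (hf : ConvexOn ℝ (Set.Ici 0) f)
    (Q : Measure X) [IsProbabilityMeasure Q]
    (hAC : ∀ θ, P θ ≪ Q)
    (hInt : ∀ θ, Integrable (fun x => f ((P θ).rnDeriv Q x).toReal) Q)
    (N : ℝ) (hN : N = Fintype.card F) :
    f (N * (1 - bayesRisk P)) + (N - 1) * f (N * bayesRisk P / (N - 1)) ≤
      ∑ θ, fDivR f (P θ) Q := by
  obtain ⟨T, hT, hmax⟩ :=
    exists_measurable_argmax fun θ => (Measure.measurable_rnDeriv (P θ) Q).ennreal_toReal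
  have hrisk : N * bayesRisk P = ∑ θ, (P θ).real {x | T x ≠ θ} := by
    have hN0 : N ≠ 0 := hN ▸ Nat.cast_ne_zero.2 Fintype.card_ne_zero
    rw [bayesRisk_eq_of_forall_rnDeriv_le Q hAC hT hmax, ← hN, mul_inv_cancel_left₀ hN0]
  have hQ : ∑ θ, Q.real {x | T x = θ} = 1 :=
    (sum_measureReal_preimage_singleton Finset.univ fun θ _ => hT θ).trans (by simp)
  have hQc : ∑ θ, Q.real {x | T x ≠ θ} = N - 1 := by
    rw [sum_measureReal_ne_eq_card_sub (P := fun _ => Q) hT, hQ, hN]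
  have hPQ θ (C : Set X) : Q.real C = 0 → (P θ).real C = 0 := by
    simpa [measureReal_eq_zero_iff] using @hAC θ C
  calc f (N * (1 - bayesRisk P)) + (N - 1) * f (N * bayesRisk P / (N - 1))
      = perspective f (∑ θ, Q.real {x | T x = θ}) (∑ θ, (P θ).real {x | T x = θ}) +
          perspective f (∑ θ, Q.real {x | T x ≠ θ}) (∑ θ, (P θ).real {x | T x ≠ θ}) := by
        rw [hQ, hQc, mul_one_sub, hrisk, sum_measureReal_ne_eq_card_sub hT, hN]
        simp [perspective]
    _ ≤ ∑ θ, (perspective f (Q.real {x | T x = θ}) ((P θ).real {x | T x = θ}) +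
          perspective f (Q.real {x | T x ≠ θ}) ((P θ).real {x | T x ≠ θ})) := by
        rw [Finset.sum_add_distrib]
        exact add_le_add
          (hf.perspective_sum_le (fun _ _ => measureReal_nonneg) (fun _ _ => measureReal_nonneg)
            fun θ _ => hPQ θ _)
          (hf.perspective_sum_le (fun _ _ => measureReal_nonneg) (fun _ _ => measureReal_nonneg)
            fun θ _ => hPQ θ _)
    _ ≤ ∑ θ, fDivR f (P θ) Q :=
        Finset.sum_le_sum fun θ _ => perspective_add_perspective_compl_le_fDivR hf (hAC θ)
          (hInt θ) (hT θ)

/-- Theorem 1, uniform prior: for every convex `f` with `f 1 = 0` and every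
probability measure `Q`, `Σ_θ D_f(P_θ‖Q) ≥ f(N(1-r̄)) + (N-1) f(N r̄/(N-1))`. -/
theorem statement1 {X F : Type*} [MeasurableSpace X] [Fintype F] [Nonempty F]
    (μ : Measure X) [SigmaFinite μ]
    (P : F → Measure X) (hPdom : ∀ θ, P θ ≪ μ) (hPprob : ∀ θ, IsProbabilityMeasure (P θ))
    (f : ℝ → ℝ) (hf : ConvexOn ℝ (Set.Ici 0) f) (hf1 : f 1 = 0)
    (Q : Measure X) [IsProbabilityMeasure Q]
    (hAC : ∀ θ, P θ ≪ Q)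
    (hInt : ∀ θ, Integrable (fun x => f ((P θ).rnDeriv Q x).toReal) Q)
    (N : ℝ) (hN : N = Fintype.card F) :
    f (N * (1 - bayesRisk P)) + (N - 1) * f (N * bayesRisk P / (N - 1)) ≤
      ∑ θ, fDivR f (P θ) Q :=
  statement1_general P hPprob f hf Q hAC hInt N hN
end

section
/- Let F be a finite set of cardinality N ≥ 2 and let P_θ, θ∈F, be probability measures on a measurable space 𝒳 dominated by a σ-finite measure μ. Let f:[0,∞)→ℝ be a differentiable convex function with f(1)=0 and define g(a) := f(N(1−a)) + (N−1)·f(Na/(N−1)). Then for every a ∈ [0, 1−1/N] and every probability measure Q on 𝒳: Σ_{θ∈F} D_f(P_θ||Q) ≥ g(a) + g'(a)·(r̄ − a), where r̄ is the uniform-prior Bayes testing risk; moreover g'(a) ≤ 0 on [0, 1−1/N], and consequently if g'(a) < 0 then r̄ ≥ a + (inf_Q Σ_{θ∈F} D_f(P_θ||Q) − g(a))/g'(a). -/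
open MeasureTheory Real

/-- The function `g(a) = f(N(1-a)) + (N-1) f(Na/(N-1))`. -/
noncomputable def gFun (f : ℝ → ℝ) (N a : ℝ) : ℝ :=
  f (N * (1 - a)) + (N - 1) * f (N * a / (N - 1))

/-- The derivative of `g`: `g'(a) = N (f'(Na/(N-1)) - f'(N(1-a)))`, where `f'` is the
(one-sided, at `0`) derivative of `f` on `[0,∞)`. -/
noncomputable def gDeriv (f : ℝ → ℝ) (N a : ℝ) : ℝ :=
  N * (derivWithin f (Set.Ici 0) (N * a / (N - 1)) - derivWithin f (Set.Ici 0) (N * (1 - a)))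

/-! For a measurable test `T` with regions `E_θ = {T = θ}`, split `D_f(P_θ‖Q)` into the
integrals over `E_θ` and `E_θᶜ` and bound `f` there from below by its tangent lines at
`c₁ = N(1-a)` and `c₂ = Na/(N-1)` respectively. As the `E_θ` partition the space, the sum over
`θ` of these bounds is exactly `g(a) + g'(a)(r(T) - a)`, `r(T)` being the risk of `T`.
Since `c₂ ≤ c₁` and `f'` is monotone, `g'(a) ≤ 0`, so the bound passes to the infimum over `T`. -/

open Set

lemma ConvexOn.add_derivWithin_mul_sub_le {S : Set ℝ} {f : ℝ → ℝ} {c u : ℝ}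
    (hf : ConvexOn ℝ S f) (hc : c ∈ S) (hu : u ∈ S) (hd : DifferentiableWithinAt ℝ f S c) :
    f c + derivWithin f S c * (u - c) ≤ f u := by
  rcases lt_trichotomy c u with h | rfl | h
  · have hslope := hf.derivWithin_le_slope hc hu h hd
    rw [slope_def_field, le_div_iff₀ (sub_pos.2 h)] at hslope
    linarith
  · simp
  · have hslope := hf.slope_le_derivWithin hu hc h hd
    rw [slope_def_field, div_le_iff₀ (sub_pos.2 h)] at hslope
    linarith

lemma gDeriv_nonpos {f : ℝ → ℝ} (hf : ConvexOn ℝ (Ici 0) f)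
    (hd : DifferentiableOn ℝ f (Ici 0)) {N a : ℝ} (hN : 1 < N) (ha0 : 0 ≤ a)
    (ha1 : a ≤ 1 - 1 / N) : gDeriv f N a ≤ 0 := by
  have hNa : N * a ≤ N - 1 := by
    have := mul_le_mul_of_nonneg_left ha1 (by linarith : (0 : ℝ) ≤ N)
    rwa [mul_sub, mul_one, mul_one_div_cancel (by linarith)] at this
  have h₂ : 0 ≤ N * a / (N - 1) := div_nonneg (by positivity) (by linarith)
  have h₂₁ : N * a / (N - 1) ≤ N * (1 - a) := by
    rw [div_le_iff₀ (by linarith)]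
    nlinarith
  exact mul_nonpos_of_nonneg_of_nonpos (by linarith)
    (sub_nonpos.2 (hf.monotoneOn_derivWithin hd h₂ (h₂.trans h₂₁) h₂₁))

section RadonNikodym

variable {X : Type*} [MeasurableSpace X] {P Q : Measure X} [IsFiniteMeasure P]
  [IsFiniteMeasure Q] {f : ℝ → ℝ}

lemma tangent_le_setIntegral_comp_rnDeriv (hPQ : P ≪ Q) (hf : ConvexOn ℝ (Ici 0) f)
    (hd : DifferentiableOn ℝ f (Ici 0))
    (hInt : Integrable (fun x => f (P.rnDeriv Q x).toReal) Q) {s : Set X}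
    (hs : MeasurableSet s) {c : ℝ} (hc : 0 ≤ c) :
    f c * Q.real s + derivWithin f (Ici 0) c * (P.real s - c * Q.real s)
      ≤ ∫ x in s, f (P.rnDeriv Q x).toReal ∂Q := by
  set d := derivWithin f (Ici 0) c
  have hr : Integrable (fun x => (P.rnDeriv Q x).toReal) Q := Measure.integrable_toReal_rnDeriv
  have hdev : Integrable (fun x => d * ((P.rnDeriv Q x).toReal - c)) Q :=
    (hr.sub (integrable_const c)).const_mul d
  calc f c * Q.real s + d * (P.real s - c * Q.real s)
      = ∫ x in s, (f c + d * ((P.rnDeriv Q x).toReal - c)) ∂Q := by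
        rw [integral_add (integrable_const (f c)).integrableOn hdev.integrableOn,
          integral_const_mul, integral_sub hr.integrableOn (integrable_const c).integrableOn,
          setIntegral_const, setIntegral_const, Measure.setIntegral_toReal_rnDeriv hPQ s,
          smul_eq_mul, smul_eq_mul]
        ring
    _ ≤ ∫ x in s, f (P.rnDeriv Q x).toReal ∂Q :=
        setIntegral_mono_on ((integrable_const _).add hdev).integrableOn hInt.integrableOn hs
          fun x _ => hf.add_derivWithin_mul_sub_le hc ENNReal.toReal_nonneg (hd c hc)

lemma tangent_split_le_fDivR (hPQ : P ≪ Q) (hf : ConvexOn ℝ (Ici 0) f)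
    (hd : DifferentiableOn ℝ f (Ici 0))
    (hInt : Integrable (fun x => f (P.rnDeriv Q x).toReal) Q) {E : Set X}
    (hE : MeasurableSet E) {c₁ c₂ : ℝ} (hc₁ : 0 ≤ c₁) (hc₂ : 0 ≤ c₂) :
    f c₁ * Q.real E + derivWithin f (Ici 0) c₁ * (P.real E - c₁ * Q.real E)
      + (f c₂ * Q.real Eᶜ + derivWithin f (Ici 0) c₂ * (P.real Eᶜ - c₂ * Q.real Eᶜ))
      ≤ fDivR f P Q := by
  rw [fDivR, ← integral_add_compl hE hInt]
  exact add_le_add (tangent_le_setIntegral_comp_rnDeriv hPQ hf hd hInt hE hc₁)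
    (tangent_le_setIntegral_comp_rnDeriv hPQ hf hd hInt hE.compl hc₂)

end RadonNikodym

lemma sum_measureReal_fiber_eq_one {X F : Type*} [MeasurableSpace X] [Fintype F]
    {Q : Measure X} [IsProbabilityMeasure Q] {T : X → F}
    (hT : ∀ θ, MeasurableSet {x | T x = θ}) : ∑ θ, Q.real {x | T x = θ} = 1 := by
  rw [← probReal_univ (μ := Q), ← preimage_univ (f := T), ← Finset.coe_univ,
    ← sum_measureReal_preimage_singleton _ fun θ _ => hT θ]
  rfl

lemma gFun_add_gDeriv_mul_le_sum_fDivR {X F : Type*} [MeasurableSpace X] [Fintype F]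
    {P : F → Measure X} [∀ θ, IsProbabilityMeasure (P θ)] {Q : Measure X}
    [IsProbabilityMeasure Q] (hPQ : ∀ θ, P θ ≪ Q) {f : ℝ → ℝ} (hf : ConvexOn ℝ (Ici 0) f)
    (hd : DifferentiableOn ℝ f (Ici 0))
    (hInt : ∀ θ, Integrable (fun x => f ((P θ).rnDeriv Q x).toReal) Q)
    {N : ℝ} (hN : N = Fintype.card F) (hN1 : 1 < N) {a : ℝ} (ha0 : 0 ≤ a) (ha1 : a ≤ 1)
    {T : X → F} (hT : ∀ θ, MeasurableSet {x | T x = θ}) :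
    gFun f N a + gDeriv f N a * (N⁻¹ * ∑ θ, (P θ {x | T x ≠ θ}).toReal - a)
      ≤ ∑ θ, fDivR f (P θ) Q := by
  set c₁ := N * (1 - a)
  set c₂ := N * a / (N - 1)
  set d₁ := derivWithin f (Ici 0) c₁
  set d₂ := derivWithin f (Ici 0) c₂
  set q : F → ℝ := fun θ => Q.real {x | T x = θ}
  set e : F → ℝ := fun θ => (P θ).real {x | T x ≠ θ}
  have hbound (θ : F) :
      (f c₁ - d₁ * c₁ - f c₂ + d₂ * c₂) * q θ + (d₁ + f c₂ - d₂ * c₂) + (d₂ - d₁) * e θ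
        ≤ fDivR f (P θ) Q := by
    have h : f c₁ * q θ + d₁ * ((P θ).real {x | T x = θ} - c₁ * q θ)
        + (f c₂ * Q.real {x | T x = θ}ᶜ + d₂ * (e θ - c₂ * Q.real {x | T x = θ}ᶜ))
        ≤ fDivR f (P θ) Q :=
      tangent_split_le_fDivR (hPQ θ) hf hd (hInt θ) (hT θ)
        (mul_nonneg (by linarith) (by linarith)) (div_nonneg (by positivity) (by linarith))
    have hQ : Q.real {x | T x = θ}ᶜ = 1 - q θ := probReal_compl_eq_one_sub (hT θ)
    have hP : (P θ).real {x | T x = θ} = 1 - e θ := by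
      have hc : e θ = 1 - (P θ).real {x | T x = θ} := probReal_compl_eq_one_sub (hT θ)
      linarith
    rw [hQ, hP] at h
    linarith
  have hsum := Finset.sum_le_sum fun θ (_ : θ ∈ Finset.univ) => hbound θ
  rw [Finset.sum_add_distrib, Finset.sum_add_distrib, ← Finset.mul_sum, ← Finset.mul_sum,
    Finset.sum_const, Finset.card_univ, nsmul_eq_mul, ← hN, sum_measureReal_fiber_eq_one hT] at hsum
  have hc₂ : (N - 1) * c₂ = N * a := mul_div_cancel₀ _ (by linarith)
  have hNN : N * N⁻¹ = 1 := mul_inv_cancel₀ (by linarith)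
  have he : ∑ θ, (P θ {x | T x ≠ θ}).toReal = ∑ θ, e θ := rfl
  have hg : gFun f N a = f c₁ + (N - 1) * f c₂ := rfl
  have hg' : gDeriv f N a = N * (d₂ - d₁) := rfl
  have hc₁ : c₁ = N * (1 - a) := rfl
  clear_value c₁ c₂ d₁ d₂
  calc gFun f N a + gDeriv f N a * (N⁻¹ * ∑ θ, (P θ {x | T x ≠ θ}).toReal - a)
      = (f c₁ - d₁ * c₁ - f c₂ + d₂ * c₂) * 1 + N * (d₁ + f c₂ - d₂ * c₂)
          + (d₂ - d₁) * ∑ θ, e θ := by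
        rw [he, hg, hg']
        linear_combination (d₂ - d₁) * (∑ θ, e θ) * hNN + d₂ * hc₂ + d₁ * hc₁
    _ ≤ ∑ θ, fDivR f (P θ) Q := hsum

theorem statement2_general {X F : Type*} [MeasurableSpace X] [Fintype F] [Nonempty F]
    (P : F → Measure X) (hPprob : ∀ θ, IsProbabilityMeasure (P θ))
    (f : ℝ → ℝ) (hf : ConvexOn ℝ (Set.Ici 0) f)
    (hf_diff : DifferentiableOn ℝ f (Set.Ici 0))
    (N : ℝ) (hN : N = Fintype.card F) (hN2 : 2 ≤ N)
    (a : ℝ) (ha0 : 0 ≤ a) (ha1 : a ≤ 1 - 1 / N)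
    (Q : Measure X) [IsProbabilityMeasure Q]
    (hAC : ∀ θ, P θ ≪ Q)
    (hInt : ∀ θ, Integrable (fun x => f ((P θ).rnDeriv Q x).toReal) Q) :
    (gFun f N a + gDeriv f N a * (bayesRisk P - a) ≤ ∑ θ, fDivR f (P θ) Q) ∧
    gDeriv f N a ≤ 0 ∧
    (gDeriv f N a < 0 →
      a + (∑ θ, fDivR f (P θ) Q - gFun f N a) / gDeriv f N a ≤ bayesRisk P) := by
  have hN1 : 1 < N := by linarith
  have hg' : gDeriv f N a ≤ 0 := gDeriv_nonpos hf hf_diff hN1 ha0 ha1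
  have hbound : gFun f N a + gDeriv f N a * (bayesRisk P - a) ≤ ∑ θ, fDivR f (P θ) Q := by
    have : Nonempty {T : X → F // ∀ θ, MeasurableSet {x | T x = θ}} :=
      ⟨⟨fun _ => Classical.arbitrary F, fun θ => MeasurableSet.const _⟩⟩
    have hanti : Antitone fun r => gFun f N a + gDeriv f N a * (r - a) := fun r s hrs =>
      add_le_add_right (mul_le_mul_of_nonpos_left (sub_le_sub_right hrs a) hg') _
    rw [bayesRisk, hanti.map_ciInf_of_continuousAt (by fun_prop) ⟨0, by
      rintro _ ⟨T, rfl⟩; positivity⟩, ← hN]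
    exact ciSup_le fun T => gFun_add_gDeriv_mul_le_sum_fDivR hAC hf hf_diff hInt hN hN1 ha0
      (ha1.trans (sub_le_self _ (one_div_nonneg.2 (by linarith)))) T.2
  refine ⟨hbound, hg', fun hneg => ?_⟩
  rw [← le_sub_iff_add_le', div_le_iff_of_neg hneg]
  linarith

/-- Corollary 1: tangent-line lower bound `Σ_θ D_f(P_θ‖Q) ≥ g(a) + g'(a)(r̄-a)`
for `a ∈ [0, 1-1/N]`, `g' ≤ 0` there, and the resulting explicit lower bound on `r̄`. -/
theorem statement2 {X F : Type*} [MeasurableSpace X] [Fintype F] [Nonempty F]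
    (μ : Measure X) [SigmaFinite μ]
    (P : F → Measure X) (hPdom : ∀ θ, P θ ≪ μ) (hPprob : ∀ θ, IsProbabilityMeasure (P θ))
    (f : ℝ → ℝ) (hf : ConvexOn ℝ (Set.Ici 0) f) (hf1 : f 1 = 0)
    (hf_diff : DifferentiableOn ℝ f (Set.Ici 0))
    (N : ℝ) (hN : N = Fintype.card F) (hN2 : 2 ≤ N)
    (a : ℝ) (ha0 : 0 ≤ a) (ha1 : a ≤ 1 - 1 / N)
    (Q : Measure X) [IsProbabilityMeasure Q]
    (hAC : ∀ θ, P θ ≪ Q)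
    (hInt : ∀ θ, Integrable (fun x => f ((P θ).rnDeriv Q x).toReal) Q) :
    (gFun f N a + gDeriv f N a * (bayesRisk P - a) ≤ ∑ θ, fDivR f (P θ) Q) ∧
    gDeriv f N a ≤ 0 ∧
    (gDeriv f N a < 0 →
      a + (∑ θ, fDivR f (P θ) Q - gFun f N a) / gDeriv f N a ≤ bayesRisk P) :=
  statement2_general P hPprob f hf hf_diff N hN hN2 a ha0 ha1 Q hAC hInt
end

section
/- Let P₁ and P₂ be probability measures on a measurable space 𝒳 with total variation distance V. Then for every convex function f:[0,∞)→ℝ with f(1)=0, inf_Q ( D_f(P₁||Q) + D_f(P₂||Q) ) ≥ f(1+V) + f(1−V), where the infimum is over all probability measures Q on 𝒳. -/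
/-!
Let `A = {p₂ ≤ p₁}`. Then `P₁(A) + P₂(Aᶜ) = 1 + V` and `P₂(A) + P₁(Aᶜ) = 1 - V`. Splitting both
divergences over `A` and `Aᶜ` and regrouping, `D_f(P₁‖Q) + D_f(P₂‖Q) = ∫ f ∘ g dQ + ∫ f ∘ g' dQ`,
where `g` equals `dP₁/dQ` on `A` and `dP₂/dQ` on `Aᶜ` (the density of `P₁|_A + P₂|_Aᶜ`) and `g'`
is the other way round. Jensen's inequality gives `∫ f ∘ g dQ ≥ f(∫ g dQ) = f(1 + V)` and
likewise `∫ f ∘ g' dQ ≥ f(1 - V)`.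
-/

open MeasureTheory Real

open Set

lemma ConvexOn.add_rightDeriv_mul_sub_le {S : Set ℝ} {f : ℝ → ℝ} (hf : ConvexOn ℝ S f)
    {c y : ℝ} (hc : c ∈ interior S) (hy : y ∈ S) :
    f c + derivWithin f (Ioi c) c * (y - c) ≤ f y := by
  rcases lt_trichotomy y c with hyc | rfl | hcy
  · have hslope := (hf.slope_le_leftDeriv_of_mem_interior hy hc hyc).trans
      (hf.leftDeriv_le_rightDeriv_of_mem_interior hc)
    rw [slope_def_field, div_le_iff₀ (sub_pos.mpr hyc)] at hslope
    linarith
  · simp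
  · have hslope := hf.rightDeriv_le_slope_of_mem_interior hc hy hcy
    rw [slope_def_field, le_div_iff₀ (sub_pos.mpr hcy)] at hslope
    linarith

/-- Unlike `ConvexOn.map_integral_le`, no continuity is needed: a convex function on `[0, ∞)` may
jump at `0`, but a supporting line at the interior point `∫ g` suffices, and `∫ g = 0` forces
`g = 0` a.e. -/
lemma ConvexOn.map_integral_le_of_nonneg {Ω : Type*} [MeasurableSpace Ω] {μ : Measure Ω}
    [IsProbabilityMeasure μ] {f : ℝ → ℝ} (hf : ConvexOn ℝ (Ici 0) f) {g : Ω → ℝ}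
    (hg0 : 0 ≤ᵐ[μ] g) (hgi : Integrable g μ) (hfg : Integrable (fun x ↦ f (g x)) μ) :
    f (∫ x, g x ∂μ) ≤ ∫ x, f (g x) ∂μ := by
  rcases (integral_nonneg_of_ae hg0).eq_or_lt with hzero | hpos
  · have hg : g =ᵐ[μ] 0 := (integral_eq_zero_iff_of_nonneg_ae hg0 hgi).mp hzero.symm
    rw [← hzero, integral_congr_ae (hg.mono fun x hx ↦ congrArg f hx)]
    simp
  · set c := ∫ x, g x ∂μ
    set k := derivWithin f (Ioi c) c
    have hc : c ∈ interior (Ici 0) := by rwa [interior_Ici]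
    have hslope : Integrable (fun x ↦ k * (g x - c)) μ := (hgi.sub (integrable_const c)).const_mul k
    calc f c = ∫ x, (f c + k * (g x - c)) ∂μ := by
          rw [integral_add (integrable_const _) hslope, integral_const_mul,
            integral_sub hgi (integrable_const c)]
          simp [c]
      _ ≤ ∫ x, f (g x) ∂μ :=
          integral_mono_ae ((integrable_const _).add hslope) hfg
            (hg0.mono fun x hx ↦ hf.add_rightDeriv_mul_sub_le hc hx)

section WithDensity

variable {X : Type*} [MeasurableSpace X] {μ : Measure X}

lemma measureReal_withDensity_ofReal {p : X → ℝ} (hp : Measurable p) (hp0 : ∀ x, 0 ≤ p x)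
    {s : Set X} (hs : MeasurableSet s) :
    (μ.withDensity fun x ↦ ENNReal.ofReal (p x)).real s = ∫ x in s, p x ∂μ := by
  rw [measureReal_def, withDensity_apply _ hs, ← integral_toReal
    hp.ennreal_ofReal.aemeasurable (ae_of_all _ fun _ ↦ ENNReal.ofReal_lt_top)]
  simp only [ENNReal.toReal_ofReal (hp0 _)]

lemma integrable_of_isFiniteMeasure_withDensity_ofReal {p : X → ℝ} (hp : Measurable p)
    (hp0 : ∀ x, 0 ≤ p x)
    [IsFiniteMeasure (μ.withDensity fun x ↦ ENNReal.ofReal (p x))] : Integrable p μ := by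
  rw [← lintegral_ofReal_ne_top_iff_integrable hp.aestronglyMeasurable (ae_of_all _ hp0),
    ← setLIntegral_univ, ← withDensity_apply _ MeasurableSet.univ]
  exact measure_ne_top _ _

lemma integral_abs_sub_eq {p₁ p₂ : X → ℝ} (h₁ : Integrable p₁ μ) (h₂ : Integrable p₂ μ)
    (hA : MeasurableSet {x | p₂ x ≤ p₁ x}) :
    ∫ x, |p₁ x - p₂ x| ∂μ =
      (∫ x in {x | p₂ x ≤ p₁ x}, p₁ x ∂μ + ∫ x in {x | p₂ x ≤ p₁ x}ᶜ, p₂ x ∂μ) -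
      (∫ x in {x | p₂ x ≤ p₁ x}, p₂ x ∂μ + ∫ x in {x | p₂ x ≤ p₁ x}ᶜ, p₁ x ∂μ) := by
  classical
  set A := {x | p₂ x ≤ p₁ x}
  have habs : (fun x ↦ |p₁ x - p₂ x|) =
      A.piecewise (fun x ↦ p₁ x - p₂ x) (fun x ↦ p₂ x - p₁ x) := by
    ext x
    by_cases hx : p₂ x ≤ p₁ x
    · simp [A, hx, abs_of_nonneg (sub_nonneg.mpr hx)]
    · simp [A, hx, abs_of_neg (sub_neg.mpr (not_le.mp hx))]
  rw [habs, integral_piecewise hA (f := fun x ↦ p₁ x - p₂ x) (g := fun x ↦ p₂ x - p₁ x)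
    (h₁.sub h₂).integrableOn (h₂.sub h₁).integrableOn,
    integral_sub h₁.integrableOn h₂.integrableOn, integral_sub h₂.integrableOn h₁.integrableOn]
  ring

end WithDensity

lemma ConvexOn.map_measureReal_add_measureReal_compl_le {X : Type*} [MeasurableSpace X]
    {P₁ P₂ Q : Measure X} [IsFiniteMeasure P₁] [IsFiniteMeasure P₂] [IsProbabilityMeasure Q]
    {f : ℝ → ℝ} (hf : ConvexOn ℝ (Ici 0) f) (h₁ : P₁ ≪ Q) (h₂ : P₂ ≪ Q)
    (hi₁ : Integrable (fun x ↦ f (P₁.rnDeriv Q x).toReal) Q)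
    (hi₂ : Integrable (fun x ↦ f (P₂.rnDeriv Q x).toReal) Q) {A : Set X} (hA : MeasurableSet A) :
    f (P₁.real A + P₂.real Aᶜ) ≤
      ∫ x in A, f (P₁.rnDeriv Q x).toReal ∂Q + ∫ x in Aᶜ, f (P₂.rnDeriv Q x).toReal ∂Q := by
  classical
  set g := A.piecewise (fun x ↦ (P₁.rnDeriv Q x).toReal) (fun x ↦ (P₂.rnDeriv Q x).toReal)
  have hg : ∫ x, g x ∂Q = P₁.real A + P₂.real Aᶜ := by
    rw [integral_piecewise hA Measure.integrable_toReal_rnDeriv.integrableOn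
      Measure.integrable_toReal_rnDeriv.integrableOn, Measure.setIntegral_toReal_rnDeriv h₁,
      Measure.setIntegral_toReal_rnDeriv h₂]
  have hfg : (fun x ↦ f (g x)) = A.piecewise (fun x ↦ f (P₁.rnDeriv Q x).toReal)
      (fun x ↦ f (P₂.rnDeriv Q x).toReal) := funext fun x ↦ A.apply_piecewise _ _ (fun _ ↦ f)
  rw [← hg, ← integral_piecewise hA hi₁.integrableOn hi₂.integrableOn, ← hfg]
  refine hf.map_integral_le_of_nonneg (ae_of_all _ fun x ↦ ?_)
    (Integrable.piecewise hA Measure.integrable_toReal_rnDeriv.integrableOn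
      Measure.integrable_toReal_rnDeriv.integrableOn)
    (hfg ▸ Integrable.piecewise hA hi₁.integrableOn hi₂.integrableOn)
  by_cases hx : x ∈ A <;> simp [g, hx]

theorem statement3_general {X : Type*} [MeasurableSpace X] (μ : Measure X)
    (p₁ p₂ : X → ℝ) (h₁m : Measurable p₁) (h₂m : Measurable p₂)
    (h₁0 : ∀ x, 0 ≤ p₁ x) (h₂0 : ∀ x, 0 ≤ p₂ x)
    (P₁ P₂ : Measure X)
    (hP₁ : P₁ = μ.withDensity fun x => ENNReal.ofReal (p₁ x))
    (hP₂ : P₂ = μ.withDensity fun x => ENNReal.ofReal (p₂ x))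
    [IsProbabilityMeasure P₁] [IsProbabilityMeasure P₂]
    (V : ℝ) (hV : V = 2⁻¹ * ∫ x, |p₁ x - p₂ x| ∂μ)
    (f : ℝ → ℝ) (hf : ConvexOn ℝ (Set.Ici 0) f)
    (Q : Measure X) [IsProbabilityMeasure Q] (h₁Q : P₁ ≪ Q) (h₂Q : P₂ ≪ Q)
    (hi₁ : Integrable (fun x => f (P₁.rnDeriv Q x).toReal) Q)
    (hi₂ : Integrable (fun x => f (P₂.rnDeriv Q x).toReal) Q) :
    f (1 + V) + f (1 - V) ≤ fDivR f P₁ Q + fDivR f P₂ Q := by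
  set A := {x | p₂ x ≤ p₁ x}
  have hA : MeasurableSet A := measurableSet_le h₂m h₁m
  have hTV : 2 * V = (P₁.real A + P₂.real Aᶜ) - (P₂.real A + P₁.real Aᶜ) := by
    have : IsFiniteMeasure (μ.withDensity fun x ↦ ENNReal.ofReal (p₁ x)) := hP₁ ▸ inferInstance
    have : IsFiniteMeasure (μ.withDensity fun x ↦ ENNReal.ofReal (p₂ x)) := hP₂ ▸ inferInstance
    rw [hV, integral_abs_sub_eq (integrable_of_isFiniteMeasure_withDensity_ofReal h₁m h₁0)
      (integrable_of_isFiniteMeasure_withDensity_ofReal h₂m h₂0) hA, hP₁, hP₂,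
      measureReal_withDensity_ofReal h₁m h₁0 hA, measureReal_withDensity_ofReal h₁m h₁0 hA.compl,
      measureReal_withDensity_ofReal h₂m h₂0 hA, measureReal_withDensity_ofReal h₂m h₂0 hA.compl]
    ring
  have hP₁A : P₁.real A + P₁.real Aᶜ = 1 := by simp [measureReal_add_measureReal_compl hA]
  have hP₂A : P₂.real A + P₂.real Aᶜ = 1 := by simp [measureReal_add_measureReal_compl hA]
  calc f (1 + V) + f (1 - V) = f (P₁.real A + P₂.real Aᶜ) + f (P₂.real A + P₁.real Aᶜ) := by
        congr 2 <;> linarith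
    _ ≤ _ := add_le_add (hf.map_measureReal_add_measureReal_compl_le h₁Q h₂Q hi₁ hi₂ hA)
        (hf.map_measureReal_add_measureReal_compl_le h₂Q h₁Q hi₂ hi₁ hA)
    _ = fDivR f P₁ Q + fDivR f P₂ Q := by
        rw [fDivR, fDivR, ← integral_add_compl hA hi₁, ← integral_add_compl hA hi₂]
        ring

/-- Corollary 2: for probability measures `P₁, P₂` with total variation
distance `V` and any convex `f` with `f 1 = 0`,
`inf_Q (D_f(P₁‖Q) + D_f(P₂‖Q)) ≥ f(1+V) + f(1-V)`; the infimum over `Q` is expressed by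
universally quantifying over probability measures `Q` (the excluded `Q`'s give `D_f = +∞`). -/
theorem statement3 {X : Type*} [MeasurableSpace X] (μ : Measure X) [SigmaFinite μ]
    (p₁ p₂ : X → ℝ) (h₁m : Measurable p₁) (h₂m : Measurable p₂)
    (h₁0 : ∀ x, 0 ≤ p₁ x) (h₂0 : ∀ x, 0 ≤ p₂ x)
    (P₁ P₂ : Measure X)
    (hP₁ : P₁ = μ.withDensity fun x => ENNReal.ofReal (p₁ x))
    (hP₂ : P₂ = μ.withDensity fun x => ENNReal.ofReal (p₂ x))
    [IsProbabilityMeasure P₁] [IsProbabilityMeasure P₂]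
    (V : ℝ) (hV : V = 2⁻¹ * ∫ x, |p₁ x - p₂ x| ∂μ)
    (f : ℝ → ℝ) (hf : ConvexOn ℝ (Set.Ici 0) f) (hf1 : f 1 = 0)
    (Q : Measure X) [IsProbabilityMeasure Q] (h₁Q : P₁ ≪ Q) (h₂Q : P₂ ≪ Q)
    (hi₁ : Integrable (fun x => f (P₁.rnDeriv Q x).toReal) Q)
    (hi₂ : Integrable (fun x => f (P₂.rnDeriv Q x).toReal) Q) :
    f (1 + V) + f (1 - V) ≤ fDivR f P₁ Q + fDivR f P₂ Q :=
  statement3_general μ p₁ p₂ h₁m h₂m h₁0 h₂0 P₁ P₂ hP₁ hP₂ V hV f hf Q h₁Q h₂Q hi₁ hi₂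
end

section
/- Fix V ∈ [0,1] and let 𝒳 = {1,2}. Define probability measures P₁ and P₂ on 𝒳 by P₁{1} = P₂{2} = (1+V)/2 and P₁{2} = P₂{1} = (1−V)/2, and let Q be the uniform probability measure Q{1} = Q{2} = 1/2. Then the total variation distance between P₁ and P₂ equals V, and for every convex function f:[0,∞)→ℝ with f(1)=0, D_f(P₁||Q) + D_f(P₂||Q) = f(1+V) + f(1−V). Consequently, the infimum of inf_Q ( D_f(P₁||Q) + D_f(P₂||Q) ) over all pairs of probability measures P₁, P₂ with total variation distance V equals f(1+V) + f(1−V). -/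
open MeasureTheory Real

/-!
Write `qᵢ = Q'{i}` and `rᵢ = dP/dQ'(i)`, so that `qᵢ rᵢ = P{i}`. Pairing the term of `P₁` at `0`
with that of `P₂` at `1`, Jensen's inequality with weights `q₀, q₁` gives
`q₀ f(r₁₀) + q₁ f(r₂₁) ≥ f(P₁{0} + P₂{1}) = f(1 + V)`, and likewise the two remaining terms are at
least `f(1 - V)`. For the uniform `Q` the densities are exactly `1 ± V`, so the bound is attained.
-/

namespace MeasureTheory.Measure

variable {X : Type*} [MeasurableSpace X]

theorem absolutelyContinuous_of_forall_measure_singleton_ne_zero {P Q : Measure X}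
    (hQ : ∀ x, Q {x} ≠ 0) : P ≪ Q := by
  intro s hs
  have : s = ∅ := Set.eq_empty_of_forall_notMem fun x hx ↦
    hQ x (measure_mono_null (Set.singleton_subset_iff.2 hx) hs)
  simp [this]

variable [MeasurableSingletonClass X]

theorem measureReal_singleton_mul_toReal_rnDeriv {P Q : Measure X} [P.HaveLebesgueDecomposition Q]
    (h : P ≪ Q) (x : X) : Q.real {x} * (P.rnDeriv Q x).toReal = P.real {x} := by
  conv_rhs => rw [← withDensity_rnDeriv_eq P Q h]
  rw [measureReal_def, measureReal_def, withDensity_apply _ (measurableSet_singleton x),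
    lintegral_singleton, ENNReal.toReal_mul, mul_comm]

end MeasureTheory.Measure

open Measure

theorem fDivR_eq_sum {X : Type*} [Fintype X] [MeasurableSpace X] [MeasurableSingletonClass X]
    (f : ℝ → ℝ) (P Q : Measure X) [IsFiniteMeasure Q] :
    fDivR f P Q = ∑ x, Q.real {x} * f ((P.rnDeriv Q x).toReal) :=
  integral_fintype .of_finite

theorem add_le_fDivR_add_fDivR {f : ℝ → ℝ} (hf : ConvexOn ℝ (Set.Ici 0) f)
    {P₁ P₂ Q : Measure (Fin 2)} [IsFiniteMeasure P₁] [IsFiniteMeasure P₂] [IsProbabilityMeasure Q]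
    (h₁ : P₁ ≪ Q) (h₂ : P₂ ≪ Q) :
    f (P₁.real {0} + P₂.real {1}) + f (P₂.real {0} + P₁.real {1}) ≤
      fDivR f P₁ Q + fDivR f P₂ Q := by
  have hq : Q.real {0} + Q.real {1} = 1 := by
    have := sum_measureReal_singleton (μ := Q) Finset.univ
    rwa [Finset.coe_univ, probReal_univ, Fin.sum_univ_two] at this
  have jensen (a b : ENNReal) :
      f (Q.real {0} * a.toReal + Q.real {1} * b.toReal) ≤
        Q.real {0} * f a.toReal + Q.real {1} * f b.toReal :=
    hf.2 ENNReal.toReal_nonneg ENNReal.toReal_nonneg measureReal_nonneg measureReal_nonneg hq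
  have j₁ := jensen (P₁.rnDeriv Q 0) (P₂.rnDeriv Q 1)
  have j₂ := jensen (P₂.rnDeriv Q 0) (P₁.rnDeriv Q 1)
  simp only [measureReal_singleton_mul_toReal_rnDeriv h₁,
    measureReal_singleton_mul_toReal_rnDeriv h₂] at j₁ j₂
  rw [fDivR_eq_sum, fDivR_eq_sum, Fin.sum_univ_two, Fin.sum_univ_two]
  linarith

theorem fDivR_eq_of_measureReal_singleton_eq_half (f : ℝ → ℝ) {P Q : Measure (Fin 2)}
    [IsFiniteMeasure P] [IsFiniteMeasure Q] (hQ : ∀ x, Q.real {x} = 1 / 2) :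
    fDivR f P Q = (f (2 * P.real {0}) + f (2 * P.real {1})) / 2 := by
  have hac : P ≪ Q := absolutelyContinuous_of_forall_measure_singleton_ne_zero fun x ↦ by
    rw [Ne, ← measureReal_eq_zero_iff, hQ]
    norm_num
  have density (x : Fin 2) : (P.rnDeriv Q x).toReal = 2 * P.real {x} := by
    have := measureReal_singleton_mul_toReal_rnDeriv hac x
    rw [hQ] at this
    linarith
  rw [fDivR_eq_sum, Fin.sum_univ_two, hQ, hQ, density, density]
  ring

section TwoPoint

variable {a b : ℝ}

instance isFiniteMeasure_twoPoint {α : Type*} [MeasurableSpace α] (x y : α) :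
    IsFiniteMeasure (ENNReal.ofReal a • dirac x + ENNReal.ofReal b • dirac y) :=
  have := (dirac x).smul_finite (ENNReal.ofReal_ne_top (r := a))
  have := (dirac y).smul_finite (ENNReal.ofReal_ne_top (r := b))
  inferInstance

theorem twoPoint_real_zero (ha : 0 ≤ a) :
    (ENNReal.ofReal a • dirac 0 + ENNReal.ofReal b • dirac 1 : Measure (Fin 2)).real {0} = a := by
  simp [measureReal_def, ha]

theorem twoPoint_real_one (hb : 0 ≤ b) :
    (ENNReal.ofReal a • dirac 0 + ENNReal.ofReal b • dirac 1 : Measure (Fin 2)).real {1} = b := by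
  simp [measureReal_def, hb]

end TwoPoint

theorem statement4_general (V : ℝ) (hV0 : 0 ≤ V) (hV1 : V ≤ 1)
    (f : ℝ → ℝ) (hf : ConvexOn ℝ (Set.Ici 0) f)
    (P₁ P₂ Q : Measure (Fin 2))
    (hP₁ : P₁ = ENNReal.ofReal ((1 + V) / 2) • Measure.dirac 0 +
      ENNReal.ofReal ((1 - V) / 2) • Measure.dirac 1)
    (hP₂ : P₂ = ENNReal.ofReal ((1 - V) / 2) • Measure.dirac 0 +
      ENNReal.ofReal ((1 + V) / 2) • Measure.dirac 1)
    (hQ : Q = ENNReal.ofReal (1 / 2) • Measure.dirac 0 +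
      ENNReal.ofReal (1 / 2) • Measure.dirac 1) :
    -- the total variation distance between `P₁` and `P₂` equals `V`
    2⁻¹ * (|(P₁ {0}).toReal - (P₂ {0}).toReal| + |(P₁ {1}).toReal - (P₂ {1}).toReal|) = V ∧
    -- the uniform `Q` attains the bound of Corollary 2 exactly
    fDivR f P₁ Q + fDivR f P₂ Q = f (1 + V) + f (1 - V) ∧
    -- and no probability measure `Q'` does better (so the infimum over `Q'` is attained)
    (∀ Q' : Measure (Fin 2), IsProbabilityMeasure Q' → P₁ ≪ Q' → P₂ ≪ Q' →
      f (1 + V) + f (1 - V) ≤ fDivR f P₁ Q' + fDivR f P₂ Q') := by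
  have hp : 0 ≤ (1 + V) / 2 := by linarith
  have hm : 0 ≤ (1 - V) / 2 := by linarith
  have hP₁0 : P₁.real {0} = (1 + V) / 2 := hP₁ ▸ twoPoint_real_zero hp
  have hP₁1 : P₁.real {1} = (1 - V) / 2 := hP₁ ▸ twoPoint_real_one hm
  have hP₂0 : P₂.real {0} = (1 - V) / 2 := hP₂ ▸ twoPoint_real_zero hm
  have hP₂1 : P₂.real {1} = (1 + V) / 2 := hP₂ ▸ twoPoint_real_one hp
  have : IsFiniteMeasure P₁ := hP₁ ▸ inferInstance
  have : IsFiniteMeasure P₂ := hP₂ ▸ inferInstance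
  have : IsFiniteMeasure Q := hQ ▸ inferInstance
  refine ⟨?_, ?_, fun Q' _ h₁ h₂ ↦ ?_⟩
  · simp only [← measureReal_def, hP₁0, hP₁1, hP₂0, hP₂1]
    rw [abs_of_nonneg (by linarith), abs_of_nonpos (by linarith)]
    ring
  · have hQx (x : Fin 2) : Q.real {x} = 1 / 2 := by
      fin_cases x
      · exact hQ ▸ twoPoint_real_zero (by norm_num)
      · exact hQ ▸ twoPoint_real_one (by norm_num)
    rw [fDivR_eq_of_measureReal_singleton_eq_half f hQx,
      fDivR_eq_of_measureReal_singleton_eq_half f hQx, hP₁0, hP₁1, hP₂0, hP₂1]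
    ring_nf
  · convert add_le_fDivR_add_fDivR hf h₁ h₂ using 3 <;> linarith

/-- sharpness of Corollary 2: on `𝒳 = {1,2}`, the pair
`P₁{1} = P₂{2} = (1+V)/2`, `P₁{2} = P₂{1} = (1-V)/2` has total variation distance `V`, and
with `Q` uniform, `D_f(P₁‖Q) + D_f(P₂‖Q) = f(1+V) + f(1-V)`; moreover no probability
measure `Q'` does better, so the infimum over pairs with total variation `V` of
`inf_Q (D_f(P₁‖Q)+D_f(P₂‖Q))` equals `f(1+V)+f(1-V)`. -/
theorem statement4 (V : ℝ) (hV0 : 0 ≤ V) (hV1 : V ≤ 1)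
    (f : ℝ → ℝ) (hf : ConvexOn ℝ (Set.Ici 0) f) (hf1 : f 1 = 0)
    (P₁ P₂ Q : Measure (Fin 2))
    (hP₁ : P₁ = ENNReal.ofReal ((1 + V) / 2) • Measure.dirac 0 +
      ENNReal.ofReal ((1 - V) / 2) • Measure.dirac 1)
    (hP₂ : P₂ = ENNReal.ofReal ((1 - V) / 2) • Measure.dirac 0 +
      ENNReal.ofReal ((1 + V) / 2) • Measure.dirac 1)
    (hQ : Q = ENNReal.ofReal (1 / 2) • Measure.dirac 0 +
      ENNReal.ofReal (1 / 2) • Measure.dirac 1) :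
    -- the total variation distance between `P₁` and `P₂` equals `V`
    2⁻¹ * (|(P₁ {0}).toReal - (P₂ {0}).toReal| + |(P₁ {1}).toReal - (P₂ {1}).toReal|) = V ∧
    -- the uniform `Q` attains the bound of Corollary 2 exactly
    fDivR f P₁ Q + fDivR f P₂ Q = f (1 + V) + f (1 - V) ∧
    -- and no probability measure `Q'` does better (so the infimum over `Q'` is attained)
    (∀ Q' : Measure (Fin 2), IsProbabilityMeasure Q' → P₁ ≪ Q' → P₂ ≪ Q' →
      f (1 + V) + f (1 - V) ≤ fDivR f P₁ Q' + fDivR f P₂ Q') :=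
  statement4_general V hV0 hV1 f hf P₁ P₂ Q hP₁ hP₂ hQ
end

section
/- Let F be a finite set of cardinality N ≥ 2 and let P_θ, θ∈F, be probability measures on a measurable space 𝒳 dominated by a σ-finite measure μ, and let P̄ := (1/N) Σ_{θ∈F} P_θ. Then (1/N) Σ_{θ∈F} D(P_θ||P̄) ≥ (1−r̄)·log(N(1−r̄)) + r̄·log(N r̄/(N−1)), where r̄ is the uniform-prior Bayes testing risk and the convention 0·log 0 = 0 is used. -/
open MeasureTheory Real
open scoped ENNReal NNReal

/-! Fix a measurable test `T` and put `A θ = {T = θ}`. Restricting the divergence to the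
two-set partition `{A θ, (A θ)ᶜ}` can only decrease it (Jensen for `x log x`), and summing the
resulting binary divergences over `θ` with the log-sum inequality, using
`Σ P̄(A θ) = 1` and `Σ P̄((A θ)ᶜ) = N - 1`, gives the inequality with the risk of `T` in place
of `r̄`. Its left side is continuous in the risk, so it passes to the infimum `r̄`. -/

/-- The Kullback-Leibler divergence `D(P‖Q) = ∫ (dP/dQ) log(dP/dQ) dQ` (real-valued;
meaningful when `P ≪ Q` and the integrand is integrable, in which case it agrees with the
usual definition). Note `Real.log 0 = 0`, implementing the convention `0 log 0 = 0`. -/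
noncomputable def klDivR {X : Type*} [MeasurableSpace X] (P Q : Measure X) : ℝ :=
  ∫ x, ((P.rnDeriv Q x).toReal) * Real.log ((P.rnDeriv Q x).toReal) ∂Q

open Finset

lemma mul_log_add_sub_le_mul_log_div {a b c : ℝ} (ha : 0 ≤ a) (hb : 0 ≤ b)
    (hab : b = 0 → a = 0) (hc : 0 < c) :
    a * log c + a - c * b ≤ a * log (a / b) := by
  rcases ha.eq_or_lt with rfl | ha
  · simp only [zero_mul, add_zero, zero_sub, zero_div, log_zero, mul_zero, neg_nonpos]
    positivity
  have hb : 0 < b := hb.lt_of_ne fun h => ha.ne' (hab h.symm)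
  have h := log_le_sub_one_of_pos (show 0 < c * b / a by positivity)
  rw [log_div (by positivity) ha.ne', log_mul hc.ne' hb.ne', le_sub_iff_add_le,
    le_div_iff₀ ha] at h
  rw [log_div ha.ne' hb.ne']
  nlinarith

/-- The log-sum inequality. -/
theorem sum_mul_log_div_sum_le {ι : Type*} (s : Finset ι) {a b : ι → ℝ}
    (ha : ∀ i ∈ s, 0 ≤ a i) (hb : ∀ i ∈ s, 0 ≤ b i) (hab : ∀ i ∈ s, b i = 0 → a i = 0)
    (hB : 0 < ∑ i ∈ s, b i) :
    (∑ i ∈ s, a i) * log ((∑ i ∈ s, a i) / ∑ i ∈ s, b i) ≤ ∑ i ∈ s, a i * log (a i / b i) := by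
  set A := ∑ i ∈ s, a i
  set B := ∑ i ∈ s, b i
  rcases (sum_nonneg ha).eq_or_lt with hA | hA
  · have hzero : ∀ i ∈ s, a i = 0 := (sum_eq_zero_iff_of_nonneg ha).mp hA.symm
    rw [show A = 0 from hA.symm, zero_mul]
    exact (sum_eq_zero fun i hi => by rw [hzero i hi, zero_mul]).ge
  -- sum the tangent-line bounds at the common ratio `A / B`
  calc A * log (A / B) = ∑ i ∈ s, (a i * log (A / B) + a i - A / B * b i) := by
        rw [sum_sub_distrib, sum_add_distrib, ← sum_mul, ← mul_sum]
        field_simp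
        ring
    _ ≤ ∑ i ∈ s, a i * log (a i / b i) := sum_le_sum fun i hi =>
        mul_log_add_sub_le_mul_log_div (ha i hi) (hb i hi) (hab i hi) (by positivity)

section Divergence

variable {X : Type*} [MeasurableSpace X]

lemma setIntegral_mul_log_div_le_setIntegral_mul_log {Q : Measure X} [IsFiniteMeasure Q]
    {f : X → ℝ} (hf0 : ∀ᵐ x ∂Q, 0 ≤ f x) (hf : Integrable f Q)
    (hflog : Integrable (fun x => f x * log (f x)) Q) (A : Set X) :
    (∫ x in A, f x ∂Q) * log ((∫ x in A, f x ∂Q) / Q.real A) ≤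
      ∫ x in A, f x * log (f x) ∂Q := by
  by_cases hQA : Q A = 0
  · simp [Measure.restrict_eq_zero.mpr hQA]
  have hQA' : 0 < Q.real A := ENNReal.toReal_pos hQA (measure_ne_top Q A)
  have jensen := (convexOn_mul_log.set_average_mem_epigraph continuous_mul_log.continuousOn
    isClosed_Ici hQA (measure_ne_top Q A) (ae_restrict_of_ae hf0) hf.integrableOn
    hflog.integrableOn).2
  simp only [setAverage_eq, smul_eq_mul, inv_mul_eq_div] at jensen
  rwa [div_mul_eq_mul_div, div_le_div_iff_of_pos_right hQA'] at jensen

lemma integrable_mul_log_of_ae_le {Q : Measure X} [IsFiniteMeasure Q] {f : X → ℝ}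
    (hf : AEStronglyMeasurable f Q) {M : ℝ} (hf0 : ∀ᵐ x ∂Q, 0 ≤ f x) (hfM : ∀ᵐ x ∂Q, f x ≤ M) :
    Integrable (fun x => f x * log (f x)) Q := by
  obtain ⟨C, hC⟩ := isCompact_Icc.exists_bound_of_continuousOn
    (continuous_mul_log.continuousOn (s := Set.Icc 0 M))
  refine .of_bound (continuous_mul_log.comp_aestronglyMeasurable hf) C ?_
  filter_upwards [hf0, hfM] with x hx0 hxM using hC (f x) ⟨hx0, hxM⟩

lemma rnDeriv_le_of_le_smul {P Q : Measure X} [SigmaFinite Q] {c : ℝ≥0∞} (h : P ≤ c • Q) :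
    ∀ᵐ x ∂Q, P.rnDeriv Q x ≤ c := by
  refine ae_le_of_forall_setLIntegral_le_of_sigmaFinite (Measure.measurable_rnDeriv P Q)
    fun s _ _ => ?_
  calc ∫⁻ x in s, P.rnDeriv Q x ∂Q ≤ P s := Measure.setLIntegral_rnDeriv_le s
    _ ≤ (c • Q) s := h s
    _ = ∫⁻ _ in s, c ∂Q := by rw [setLIntegral_const, Measure.smul_apply, smul_eq_mul]

lemma measureReal_mul_log_div_add_compl_le_klDivR {P Q : Measure X} [IsFiniteMeasure P]
    [IsFiniteMeasure Q] (hPQ : P ≪ Q)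
    (hint : Integrable (fun x => (P.rnDeriv Q x).toReal * log (P.rnDeriv Q x).toReal) Q)
    {A : Set X} (hA : MeasurableSet A) :
    P.real A * log (P.real A / Q.real A) + P.real Aᶜ * log (P.real Aᶜ / Q.real Aᶜ) ≤
      klDivR P Q := by
  have key (B : Set X) := setIntegral_mul_log_div_le_setIntegral_mul_log
    (ae_of_all Q fun x => (P.rnDeriv Q x).toReal_nonneg) Measure.integrable_toReal_rnDeriv hint B
  simp only [Measure.setIntegral_toReal_rnDeriv hPQ] at key
  rw [klDivR, ← integral_add_compl hA hint]
  exact add_le_add (key A) (key Aᶜ)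

lemma measureReal_eq_zero_of_absolutelyContinuous {P Q : Measure X} [IsFiniteMeasure Q]
    (hPQ : P ≪ Q) {A : Set X} (hA : Q.real A = 0) : P.real A = 0 := by
  rw [measureReal_eq_zero_iff] at hA
  simp [Measure.real, hPQ hA]

end Divergence

section Mixture

variable {X F : Type*} [MeasurableSpace X] [Fintype F] (P : F → Measure X)

noncomputable def mixture : Measure X := (Fintype.card F : ℝ≥0∞)⁻¹ • ∑ θ, P θ

instance [Nonempty F] [∀ θ, IsProbabilityMeasure (P θ)] : IsProbabilityMeasure (mixture P) := by
  constructor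
  simp [mixture, Measure.finsetSum_apply, ENNReal.inv_mul_cancel]

lemma le_card_smul_mixture [Nonempty F] (θ : F) : P θ ≤ (Fintype.card F : ℝ≥0∞) • mixture P := by
  rw [mixture, smul_smul, ENNReal.mul_inv_cancel (by simp) (by simp), one_smul]
  exact Finset.single_le_sum (f := P) (fun _ _ => Measure.zero_le _) (Finset.mem_univ θ)

lemma absolutelyContinuous_mixture [Nonempty F] (θ : F) : P θ ≪ mixture P :=
  Measure.absolutelyContinuous_of_le_smul (le_card_smul_mixture P θ)

lemma integrable_rnDeriv_mul_log_mixture [Nonempty F] [∀ θ, IsProbabilityMeasure (P θ)]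
    (θ : F) :
    Integrable (fun x => ((P θ).rnDeriv (mixture P) x).toReal *
      log ((P θ).rnDeriv (mixture P) x).toReal) (mixture P) := by
  refine integrable_mul_log_of_ae_le
    (Measure.measurable_rnDeriv _ _).ennreal_toReal.aestronglyMeasurable
    (ae_of_all _ fun x => ENNReal.toReal_nonneg) (M := Fintype.card F) ?_
  filter_upwards [rnDeriv_le_of_le_smul (le_card_smul_mixture P θ)] with x hx
  simpa using ENNReal.toReal_mono (by simp) hx

end Mixture

section Fano

/-- The binary divergence `D((1 - s, s) ‖ (1/N, 1 - 1/N))` between the outcome of a test with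
risk `s` and that of blind guessing. -/
noncomputable def fanoBound (N s : ℝ) : ℝ :=
  (1 - s) * log (N * (1 - s)) + s * log (N * s / (N - 1))

lemma continuous_mul_log_const_mul (c : ℝ) : Continuous fun x : ℝ => x * log (c * x) := by
  rcases eq_or_ne c 0 with rfl | hc
  · simpa using continuous_const
  have h : (fun x : ℝ => x * log (c * x)) = fun x => x * log c + x * log x := by
    ext x
    rcases eq_or_ne x 0 with rfl | hx
    · simp
    · rw [log_mul hc hx, mul_add]
  rw [h]
  exact (continuous_id.mul continuous_const).add continuous_mul_log

lemma continuous_fanoBound (N : ℝ) : Continuous (fanoBound N) := by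
  unfold fanoBound
  simp_rw [mul_div_right_comm N]
  exact ((continuous_mul_log_const_mul N).comp (continuous_const.sub continuous_id)).add
    (continuous_mul_log_const_mul _)

variable {X F : Type*} [MeasurableSpace X] [Fintype F]

noncomputable def testRisk (P : F → Measure X) (T : X → F) : ℝ :=
  (Fintype.card F : ℝ)⁻¹ * ∑ θ, (P θ {x | T x ≠ θ}).toReal

theorem fanoBound_testRisk_le (P : F → Measure X) [∀ θ, IsProbabilityMeasure (P θ)]
    (hF : 1 < Fintype.card F) {Q : Measure X} [IsProbabilityMeasure Q] (hPQ : ∀ θ, P θ ≪ Q)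
    (hint : ∀ θ, Integrable (fun x => ((P θ).rnDeriv Q x).toReal *
      log ((P θ).rnDeriv Q x).toReal) Q)
    {T : X → F} (hT : ∀ θ, MeasurableSet {x | T x = θ}) :
    fanoBound (Fintype.card F) (testRisk P T) ≤
      (Fintype.card F : ℝ)⁻¹ * ∑ θ, klDivR (P θ) Q := by
  set N : ℝ := (Fintype.card F : ℝ)
  have hN : 1 < N := Nat.one_lt_cast.mpr hF
  set A : F → Set X := fun θ => {x | T x = θ}
  have hA : ∀ θ, MeasurableSet (A θ) := hT
  -- `S` and `R` are the total probabilities of correct and of wrong decisions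
  set S := ∑ θ, (P θ).real (A θ)
  set R := ∑ θ, (P θ).real (A θ)ᶜ
  have hSR : S + R = N := by
    simp only [S, R, ← Finset.sum_add_distrib, measureReal_add_measureReal_compl (hA _),
      probReal_univ, Finset.sum_const, Finset.card_univ, nsmul_one, N]
  have hQA : ∑ θ, Q.real (A θ) = 1 := by
    have := sum_measureReal_preimage_singleton (μ := Q) Finset.univ (f := T) fun θ _ => hT θ
    rwa [Finset.coe_univ, Set.preimage_univ, probReal_univ] at this
  have hQAc : ∑ θ, Q.real (A θ)ᶜ = N - 1 := by
    simp only [measureReal_compl (hA _), Finset.sum_sub_distrib, hQA, probReal_univ,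
      Finset.sum_const, Finset.card_univ, nsmul_one, N]
  have hac (B : F → Set X) (θ : F) (_ : θ ∈ Finset.univ) :=
    measureReal_eq_zero_of_absolutelyContinuous (hPQ θ) (A := B θ)
  have hS := sum_mul_log_div_sum_le Finset.univ (fun θ _ => measureReal_nonneg)
    (fun θ _ => measureReal_nonneg) (hac A) (by rw [hQA]; exact one_pos)
  have hR := sum_mul_log_div_sum_le Finset.univ (fun θ _ => measureReal_nonneg)
    (fun θ _ => measureReal_nonneg) (hac fun θ => (A θ)ᶜ) (by rw [hQAc]; linarith)
  rw [hQA] at hS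
  rw [hQAc] at hR
  have hrisk : testRisk P T = R / N := by
    rw [div_eq_inv_mul]
    rfl
  have hfano : N * fanoBound N (R / N) = S * log (S / 1) + R * log (R / (N - 1)) := by
    have hS' : N * (1 - R / N) = S := by field_simp; linarith
    have hR' : N * (R / N) = R := by field_simp
    rw [fanoBound, hS', hR', div_one, mul_add, ← mul_assoc, ← mul_assoc, hS', hR']
  rw [hrisk, ← mul_le_mul_iff_of_pos_left (by positivity : 0 < N), hfano,
    mul_inv_cancel_left₀ (by positivity)]
  calc S * log (S / 1) + R * log (R / (N - 1))
      ≤ ∑ θ, ((P θ).real (A θ) * log ((P θ).real (A θ) / Q.real (A θ)) +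
          (P θ).real (A θ)ᶜ * log ((P θ).real (A θ)ᶜ / Q.real (A θ)ᶜ)) := by
        rw [Finset.sum_add_distrib]
        exact add_le_add hS hR
    _ ≤ ∑ θ, klDivR (P θ) Q := Finset.sum_le_sum fun θ _ =>
        measureReal_mul_log_div_add_compl_le_klDivR (hPQ θ) (hint θ) (hT θ)

end Fano

theorem statement5_general {X F : Type*} [MeasurableSpace X] [Fintype F]
    (P : F → Measure X) (hPprob : ∀ θ, IsProbabilityMeasure (P θ))
    (N : ℝ) (hN : N = Fintype.card F) (hN2 : 2 ≤ N)
    (Pbar : Measure X) (hPbar : Pbar = (Fintype.card F : ℝ≥0∞)⁻¹ • ∑ θ, P θ)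
    (r : ℝ) (hr : r = bayesRisk P) :
    (1 - r) * Real.log (N * (1 - r)) + r * Real.log (N * r / (N - 1)) ≤
      N⁻¹ * ∑ θ, klDivR (P θ) Pbar := by
  have hF : 1 < Fintype.card F := by
    rw [hN] at hN2
    exact_mod_cast one_lt_two.trans_le hN2
  have : Nonempty F := Fintype.card_pos_iff.mp (by omega)
  subst hN hPbar hr
  change fanoBound _ (bayesRisk P) ≤ (Fintype.card F : ℝ)⁻¹ * ∑ θ, klDivR (P θ) (mixture P)
  set risks := Set.range
    fun T : {T : X → F // ∀ θ, MeasurableSet {x | T x = θ}} => testRisk P T.1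
  have hne : risks.Nonempty :=
    ⟨_, ⟨fun _ => Classical.arbitrary F, fun _ => MeasurableSet.const _⟩, rfl⟩
  have hbdd : BddBelow risks := ⟨0, by rintro _ ⟨T, rfl⟩; unfold testRisk; positivity⟩
  -- the bound holds at every risk, hence on their closure, which contains the infimum
  refine (isClosed_le (continuous_fanoBound _) continuous_const).closure_subset_iff.mpr ?_
    (csInf_mem_closure hne hbdd)
  rintro _ ⟨T, rfl⟩
  exact fanoBound_testRisk_le P hF (absolutelyContinuous_mixture P)
    (integrable_rnDeriv_mul_log_mixture P) T.2

/-- sharpened Fano inequality / Example 1: the Jensen-Shannon divergence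
`(1/N) Σ_θ D(P_θ‖P̄)` is at least `(1-r̄) log(N(1-r̄)) + r̄ log(N r̄/(N-1))`. -/
theorem statement5 {X F : Type*} [MeasurableSpace X] [Fintype F]
    (μ : Measure X) [SigmaFinite μ]
    (P : F → Measure X) (hPdom : ∀ θ, P θ ≪ μ) (hPprob : ∀ θ, IsProbabilityMeasure (P θ))
    (N : ℝ) (hN : N = Fintype.card F) (hN2 : 2 ≤ N)
    (Pbar : Measure X) (hPbar : Pbar = (Fintype.card F : ℝ≥0∞)⁻¹ • ∑ θ, P θ)
    (r : ℝ) (hr : r = bayesRisk P) :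
    (1 - r) * Real.log (N * (1 - r)) + r * Real.log (N * r / (N - 1)) ≤
      N⁻¹ * ∑ θ, klDivR (P θ) Pbar :=
  statement5_general P hPprob N hN hN2 Pbar hPbar r hr
end

section
/- Let F be a finite set of cardinality N ≥ 2 and let P_θ, θ∈F, be probability measures on a measurable space 𝒳 dominated by a σ-finite measure μ, and let P̄ := (1/N) Σ_{θ∈F} P_θ. Then the uniform-prior Bayes testing risk satisfies Fano's inequality: r̄ ≥ 1 − ( log 2 + (1/N) Σ_{θ∈F} D(P_θ||P̄) ) / log N. -/
open MeasureTheory Real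
open scoped ENNReal NNReal

/-! The tangent-line bound `x log x ≥ x log y + x - y`, integrated against `Q` with `x = dP/dQ`
and `y = g`, gives the Gibbs variational bound `D(P‖Q) ≥ ∫ log g dP - ∫ g dQ + 1` for every
positive `g`. Given a test `T`, take for `P_θ` the function `g_θ` equal to `N/2` on `{T = θ}` and
to `1/2` elsewhere: since the sets `{T = θ}` partition the space, the terms `∫ g_θ dQ` add up to
`N - 1/2` for every probability measure `Q`, and summing over `θ` gives
`Σ_θ D(P_θ‖Q) ≥ log N · Σ_θ P_θ{T = θ} - N log 2`, which rearranges to Fano's inequality for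
`Q = P̄`. The divergences `D(P_θ‖P̄)` are finite because `dP_θ/dP̄ ≤ N`. -/

open Set

lemma mul_log_add_sub_le_mul_log {x y : ℝ} (hx : 0 ≤ x) (hy : 0 < y) :
    x * log y + x - y ≤ x * log x := by
  rcases hx.eq_or_lt with rfl | hx
  · simpa using hy.le
  have h := log_le_sub_one_of_pos (div_pos hy hx)
  rw [log_div hy.ne' hx.ne', le_sub_iff_add_le, le_div_iff₀ hx] at h
  linear_combination h

lemma MeasureTheory.Measure.rnDeriv_le_of_le_smul {X : Type*} [MeasurableSpace X]
    {μ ν : Measure X} [SigmaFinite ν] {c : ℝ≥0∞} (h : μ ≤ c • ν) :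
    μ.rnDeriv ν ≤ᵐ[ν] fun _ ↦ c := by
  refine ae_le_of_forall_setLIntegral_le_of_sigmaFinite (μ.measurable_rnDeriv ν) fun s _ _ ↦ ?_
  calc ∫⁻ x in s, μ.rnDeriv ν x ∂ν ≤ μ s := Measure.setLIntegral_rnDeriv_le s
    _ ≤ (c • ν) s := h s
    _ = ∫⁻ _ in s, c ∂ν := by rw [setLIntegral_const, Measure.smul_apply, smul_eq_mul, mul_comm]

section

variable {X F : Type*} [MeasurableSpace X] [Fintype F]

lemma integrable_ite_mem_const (μ : Measure X) [IsFiniteMeasure μ] {A : Set X}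
    [DecidablePred (· ∈ A)] (hA : MeasurableSet A) (a b : ℝ) :
    Integrable (fun x ↦ if x ∈ A then a else b) μ :=
  Integrable.piecewise hA (integrable_const a).integrableOn (integrable_const b).integrableOn

lemma integral_ite_mem_const (μ : Measure X) [IsFiniteMeasure μ] {A : Set X}
    [DecidablePred (· ∈ A)] (hA : MeasurableSet A) (a b : ℝ) :
    ∫ x, (if x ∈ A then a else b) ∂μ = μ.real A * a + μ.real Aᶜ * b := by
  change ∫ x, A.piecewise (fun _ ↦ a) (fun _ ↦ b) x ∂μ = _
  rw [integral_piecewise hA (integrable_const a).integrableOn (integrable_const b).integrableOn,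
    setIntegral_const, setIntegral_const, smul_eq_mul, smul_eq_mul]

lemma integrable_mul_log_rnDeriv_of_le_smul {μ ν : Measure X} [IsFiniteMeasure ν] {c : ℝ≥0}
    (h : μ ≤ (c : ℝ≥0∞) • ν) :
    Integrable (fun x ↦ (μ.rnDeriv ν x).toReal * log (μ.rnDeriv ν x).toReal) ν := by
  obtain ⟨C, hC⟩ := (isCompact_Icc (a := (0 : ℝ)) (b := c)).exists_bound_of_continuousOn
    continuous_mul_log.continuousOn
  refine Integrable.of_bound (by fun_prop) C ?_
  filter_upwards [Measure.rnDeriv_le_of_le_smul h] with x hx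
  exact hC _ ⟨ENNReal.toReal_nonneg, ENNReal.toReal_le_of_le_ofReal c.coe_nonneg (by simpa using hx)⟩

/-- Gibbs' (Donsker–Varadhan) variational lower bound. -/
lemma integral_log_sub_integral_add_le_klDivR {P Q : Measure X} [IsFiniteMeasure P]
    [IsFiniteMeasure Q] (hPQ : P ≪ Q)
    (hint : Integrable (fun x ↦ (P.rnDeriv Q x).toReal * log (P.rnDeriv Q x).toReal) Q)
    {g : X → ℝ} (hg : ∀ x, 0 < g x) (hgQ : Integrable g Q)
    (hgP : Integrable (fun x ↦ log (g x)) P) :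
    ∫ x, log (g x) ∂P - ∫ x, g x ∂Q + P.real univ ≤ klDivR P Q := by
  set f : X → ℝ := fun x ↦ (P.rnDeriv Q x).toReal
  have hf : Integrable f Q := Measure.integrable_toReal_rnDeriv
  have hfg : Integrable (fun x ↦ f x * log (g x)) Q :=
    (integrable_toReal_rnDeriv_mul_iff hPQ).2 hgP
  have hfgf : Integrable (fun x ↦ f x * log (g x) + f x) Q := hfg.add hf
  calc ∫ x, log (g x) ∂P - ∫ x, g x ∂Q + P.real univ
      = ∫ x, (f x * log (g x) + f x - g x) ∂Q := by
        rw [integral_sub hfgf hgQ, integral_add hfg hf, integral_toReal_rnDeriv_mul hPQ,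
          Measure.integral_toReal_rnDeriv hPQ]
        ring
    _ ≤ klDivR P Q :=
        integral_mono (hfgf.sub hgQ) hint
          fun x ↦ mul_log_add_sub_le_mul_log ENNReal.toReal_nonneg (hg x)

theorem log_card_mul_sum_sub_le_sum_klDivR (P : F → Measure X)
    [∀ θ, IsProbabilityMeasure (P θ)] (Q : Measure X) [IsProbabilityMeasure Q]
    (hPQ : ∀ θ, P θ ≪ Q)
    (hint : ∀ θ, Integrable
      (fun x ↦ ((P θ).rnDeriv Q x).toReal * log ((P θ).rnDeriv Q x).toReal) Q)
    (T : X → F) (hT : ∀ θ, MeasurableSet {x | T x = θ}) :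
    log (Fintype.card F) * ∑ θ, (P θ).real {x | T x = θ} - Fintype.card F * log 2
      ≤ ∑ θ, klDivR (P θ) Q := by
  classical
  set N : ℝ := (Fintype.card F : ℝ)
  have hpartition : ∑ θ, Q.real {x | T x = θ} = 1 := by
    have h := sum_measureReal_preimage_singleton (μ := Q) Finset.univ fun θ _ ↦ hT θ
    rwa [Finset.coe_univ, preimage_univ, probReal_univ] at h
  have hgibbs (θ : F) : (P θ).real {x | T x = θ} * log N - log 2
      - (N - 1) / 2 * Q.real {x | T x = θ} + 1 / 2 ≤ klDivR (P θ) Q := by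
    have hN : 0 < N := Nat.cast_pos.2 (Fintype.card_pos_iff.2 ⟨θ⟩)
    set A := {x | T x = θ}
    have h := integral_log_sub_integral_add_le_klDivR (hPQ θ) (hint θ)
      (g := fun x ↦ if x ∈ A then N / 2 else 1 / 2) (fun x ↦ by split_ifs <;> positivity)
      (integrable_ite_mem_const _ (hT θ) _ _)
      (by simpa only [apply_ite log] using integrable_ite_mem_const _ (hT θ) _ _)
    simp_rw [apply_ite log] at h
    rw [integral_ite_mem_const _ (hT θ), integral_ite_mem_const _ (hT θ),
      probReal_compl_eq_one_sub (hT θ), probReal_compl_eq_one_sub (hT θ), probReal_univ,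
      log_div hN.ne' two_ne_zero, one_div, log_inv] at h
    linear_combination h
  calc log N * ∑ θ, (P θ).real {x | T x = θ} - N * log 2
      ≤ ∑ θ, ((P θ).real {x | T x = θ} * log N - log 2
          - (N - 1) / 2 * Q.real {x | T x = θ} + 1 / 2) := by
        simp only [Finset.sum_add_distrib, Finset.sum_sub_distrib, ← Finset.sum_mul,
          ← Finset.mul_sum, hpartition, Finset.sum_const, Finset.card_univ, nsmul_eq_mul]
        linarith
    _ ≤ ∑ θ, klDivR (P θ) Q := Finset.sum_le_sum fun θ _ ↦ hgibbs θ

noncomputable def uniformMixture (P : F → Measure X) : Measure X :=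
  (Fintype.card F : ℝ≥0∞)⁻¹ • ∑ θ, P θ

lemma le_card_smul_uniformMixture (P : F → Measure X) (θ : F) :
    P θ ≤ ((Fintype.card F : ℝ≥0) : ℝ≥0∞) • uniformMixture P := by
  have hcard : (Fintype.card F : ℝ≥0∞) ≠ 0 := by
    simpa using (Fintype.card_pos_iff.2 ⟨θ⟩).ne'
  rw [uniformMixture, smul_smul, ENNReal.coe_natCast, ENNReal.mul_inv_cancel hcard (by simp),
    one_smul]
  exact Finset.single_le_sum (fun _ _ ↦ Measure.zero_le _) (Finset.mem_univ θ)

lemma isProbabilityMeasure_uniformMixture [Nonempty F] (P : F → Measure X)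
    [∀ θ, IsProbabilityMeasure (P θ)] : IsProbabilityMeasure (uniformMixture P) :=
  ⟨by simp [uniformMixture, ENNReal.inv_mul_cancel]⟩

lemma sum_toReal_measure_ne_eq (P : F → Measure X) [∀ θ, IsProbabilityMeasure (P θ)]
    {T : X → F} (hT : ∀ θ, MeasurableSet {x | T x = θ}) :
    ∑ θ, (P θ {x | T x ≠ θ}).toReal = Fintype.card F - ∑ θ, (P θ).real {x | T x = θ} := by
  change ∑ θ, (P θ).real {x | T x = θ}ᶜ = _
  simp [probReal_compl_eq_one_sub (hT _)]

end

theorem statement6_general {X F : Type*} [MeasurableSpace X] [Fintype F]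
    (P : F → Measure X) (hPprob : ∀ θ, IsProbabilityMeasure (P θ))
    (N : ℝ) (hN : N = Fintype.card F) (hN2 : 2 ≤ N)
    (Pbar : Measure X) (hPbar : Pbar = (Fintype.card F : ℝ≥0∞)⁻¹ • ∑ θ, P θ) :
    1 - (Real.log 2 + N⁻¹ * ∑ θ, klDivR (P θ) Pbar) / Real.log N ≤ bayesRisk P := by
  change Pbar = uniformMixture P at hPbar
  subst hN hPbar
  have : Nonempty F :=
    Fintype.card_pos_iff.1 (by exact_mod_cast (by linarith : (0 : ℝ) < Fintype.card F))
  have : IsProbabilityMeasure (uniformMixture P) := isProbabilityMeasure_uniformMixture P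
  have : Nonempty {T : X → F // ∀ θ, MeasurableSet {x | T x = θ}} :=
    ⟨⟨fun _ ↦ Classical.arbitrary F, fun _ ↦ MeasurableSet.const _⟩⟩
  refine le_ciInf fun T ↦ ?_
  have hfano := log_card_mul_sum_sub_le_sum_klDivR P (uniformMixture P)
    (fun θ ↦ Measure.absolutelyContinuous_of_le_smul (le_card_smul_uniformMixture P θ))
    (fun θ ↦ integrable_mul_log_rnDeriv_of_le_smul (le_card_smul_uniformMixture P θ)) T.1 T.2
  rw [sum_toReal_measure_ne_eq P T.2]
  set N : ℝ := (Fintype.card F : ℝ)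
  set S := ∑ θ, (P θ).real {x | T.1 x = θ}
  rw [show N⁻¹ * (N - S) = 1 - S / N by field_simp, sub_le_sub_iff_left,
    div_le_div_iff₀ (by linarith) (log_pos (by linarith))]
  field_simp
  linarith

/-- Fano's inequality: `r̄ ≥ 1 - (log 2 + (1/N) Σ_θ D(P_θ‖P̄)) / log N`. -/
theorem statement6 {X F : Type*} [MeasurableSpace X] [Fintype F]
    (μ : Measure X) [SigmaFinite μ]
    (P : F → Measure X) (hPdom : ∀ θ, P θ ≪ μ) (hPprob : ∀ θ, IsProbabilityMeasure (P θ))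
    (N : ℝ) (hN : N = Fintype.card F) (hN2 : 2 ≤ N)
    (Pbar : Measure X) (hPbar : Pbar = (Fintype.card F : ℝ≥0∞)⁻¹ • ∑ θ, P θ) :
    1 - (Real.log 2 + N⁻¹ * ∑ θ, klDivR (P θ) Pbar) / Real.log N ≤ bayesRisk P :=
  statement6_general P hPprob N hN hN2 Pbar hPbar
end

section
/- Let P₁ and P₂ be probability measures on a measurable space with total variation distance V, and let P̄ := (P₁ + P₂)/2. Then D(P₁||P̄) + D(P₂||P̄) ≥ (1+V)·log(1+V) + (1−V)·log(1−V), with the convention 0·log 0 = 0. -/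
/-! Writing `rᵢ = dPᵢ/dP̄`, we have `r₁ + r₂ = 2` `P̄`-a.e., so
`r₁ log r₁ + r₂ log r₂ = ψ(|r₁ - 1|)` for the convex function
`ψ(v) = (1 + v) log (1 + v) + (1 - v) log (1 - v)`, while `|r₁ - 1| = |r₁ - r₂| / 2` integrates
against `P̄` to the total variation distance `V`, which does not depend on the dominating measure.
Jensen's inequality then gives `D(P₁‖P̄) + D(P₂‖P̄) = ∫ ψ(|r₁ - 1|) dP̄ ≥ ψ(V)`. -/

open MeasureTheory Real Set
open scoped ENNReal NNReal

noncomputable def topsoeFun (v : ℝ) : ℝ := (1 + v) * log (1 + v) + (1 - v) * log (1 - v)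

lemma continuous_topsoeFun : Continuous topsoeFun :=
  (continuous_mul_log.comp (continuous_const_add 1)).add
    (continuous_mul_log.comp (continuous_sub_left 1))

lemma convexOn_topsoeFun : ConvexOn ℝ (Icc (-1) 1) topsoeFun := by
  have h₁ : ConvexOn ℝ (Ici (-1)) fun v : ℝ => (1 + v) * log (1 + v) := by
    simpa [Function.comp_def] using convexOn_mul_log.translate_right 1
  have h₂ : ConvexOn ℝ (Iic 1) fun v : ℝ => (1 - v) * log (1 - v) := by
    convert h₁.comp_linearMap (-LinearMap.id) using 1
    · rfl
    · ext v; simp [neg_le]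
    · funext v; simp [sub_eq_add_neg]
  exact (h₁.subset Icc_subset_Ici_self (convex_Icc _ _)).add
    (h₂.subset Icc_subset_Iic_self (convex_Icc _ _))

lemma mul_log_add_mul_log_eq_topsoeFun {a b : ℝ} (hab : a + b = 2) :
    a * log a + b * log b = topsoeFun |a - 1| := by
  rcases le_total 1 a with h | h
  · rw [abs_of_nonneg (sub_nonneg.2 h), topsoeFun, show b = 1 - (a - 1) by linarith]
    ring_nf
  · rw [abs_of_nonpos (sub_nonpos.2 h), topsoeFun, show b = 1 + -(a - 1) by linarith]
    ring_nf

lemma Continuous.integrable_comp_of_ae_mem_isCompact {X E F : Type*} [MeasurableSpace X]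
    {μ : Measure X} [IsFiniteMeasure μ] [TopologicalSpace E] [NormedAddCommGroup F]
    {f : E → F} (hf : Continuous f) {K : Set E} (hK : IsCompact K) {g : X → E}
    (hg : AEStronglyMeasurable g μ) (hgK : ∀ᵐ x ∂μ, g x ∈ K) :
    Integrable (fun x => f (g x)) μ := by
  obtain ⟨C, hC⟩ := hK.exists_bound_of_continuousOn hf.continuousOn
  refine Integrable.mono' (integrable_const C) (hf.comp_aestronglyMeasurable hg) ?_
  filter_upwards [hgK] with x hx using hC _ hx

lemma integral_abs_sub_toReal_rnDeriv_eq_of_absolutelyContinuous {X : Type*} [MeasurableSpace X]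
    {μ Q P P' : Measure X} [SigmaFinite μ] [SigmaFinite Q] [SigmaFinite P] [SigmaFinite P']
    (hP : P ≪ Q) (hP' : P' ≪ Q) (hQ : Q ≪ μ) :
    ∫ x, |(P.rnDeriv Q x).toReal - (P'.rnDeriv Q x).toReal| ∂Q =
      ∫ x, |(P.rnDeriv μ x).toReal - (P'.rnDeriv μ x).toReal| ∂μ := by
  rw [← integral_rnDeriv_smul hQ]
  refine integral_congr_ae ?_
  filter_upwards [Measure.rnDeriv_mul_rnDeriv (κ := μ) hP, Measure.rnDeriv_mul_rnDeriv (κ := μ) hP']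
    with x h h'
  rw [← h, ← h', Pi.mul_apply, Pi.mul_apply, ENNReal.toReal_mul, ENNReal.toReal_mul, smul_eq_mul,
    ← sub_mul, abs_mul, abs_of_nonneg (ENNReal.toReal_nonneg (a := Q.rnDeriv μ x)), mul_comm]

lemma toReal_rnDeriv_withDensity_ofReal {X : Type*} [MeasurableSpace X] (μ : Measure X)
    [SigmaFinite μ] {f : X → ℝ} (hf : AEMeasurable f μ) (hf0 : 0 ≤ᵐ[μ] f) :
    ∀ᵐ x ∂μ, ((μ.withDensity fun x => ENNReal.ofReal (f x)).rnDeriv μ x).toReal = f x := by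
  filter_upwards [Measure.rnDeriv_withDensity₀ μ hf.ennreal_ofReal, hf0] with x h h0
  rw [h, ENNReal.toReal_ofReal h0]

section Midpoint

variable {X : Type*} [MeasurableSpace X] {P₁ P₂ Pbar : Measure X}

lemma absolutelyContinuous_midpoint_left (hPbar : Pbar = (2 : ℝ≥0∞)⁻¹ • (P₁ + P₂)) :
    P₁ ≪ Pbar :=
  hPbar ▸ (Measure.AbsolutelyContinuous.rfl.add_right P₂).smul_right (by simp)

lemma absolutelyContinuous_midpoint_right (hPbar : Pbar = (2 : ℝ≥0∞)⁻¹ • (P₁ + P₂)) :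
    P₂ ≪ Pbar :=
  absolutelyContinuous_midpoint_left (P₂ := P₁) (by rw [hPbar, add_comm])

lemma isFiniteMeasure_midpoint [IsFiniteMeasure P₁] [IsFiniteMeasure P₂]
    (hPbar : Pbar = (2 : ℝ≥0∞)⁻¹ • (P₁ + P₂)) : IsFiniteMeasure Pbar :=
  hPbar ▸ Measure.smul_finite _ (by simp)

lemma isProbabilityMeasure_midpoint [IsProbabilityMeasure P₁] [IsProbabilityMeasure P₂]
    (hPbar : Pbar = (2 : ℝ≥0∞)⁻¹ • (P₁ + P₂)) : IsProbabilityMeasure Pbar := by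
  subst hPbar
  constructor
  rw [Measure.smul_apply, Measure.add_apply, measure_univ, measure_univ, one_add_one_eq_two,
    smul_eq_mul, ENNReal.inv_mul_cancel two_ne_zero ENNReal.ofNat_ne_top]

lemma toReal_rnDeriv_add_toReal_rnDeriv_midpoint [IsFiniteMeasure P₁] [IsFiniteMeasure P₂]
    (hPbar : Pbar = (2 : ℝ≥0∞)⁻¹ • (P₁ + P₂)) :
    ∀ᵐ x ∂Pbar, (P₁.rnDeriv Pbar x).toReal + (P₂.rnDeriv Pbar x).toReal = 2 := by
  have := isFiniteMeasure_midpoint hPbar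
  have hsum : P₁ + P₂ = (2 : ℝ≥0∞) • Pbar := by
    rw [hPbar, smul_smul, ENNReal.mul_inv_cancel two_ne_zero ENNReal.ofNat_ne_top, one_smul]
  filter_upwards [Measure.rnDeriv_add P₁ P₂ Pbar,
    Measure.rnDeriv_smul_left_of_ne_top Pbar Pbar ENNReal.ofNat_ne_top (r := 2),
    Measure.rnDeriv_self Pbar] with x hadd hsmul hself
  rw [← hsum] at hsmul
  have h : P₁.rnDeriv Pbar x + P₂.rnDeriv Pbar x = 2 := by
    simpa [hself] using hadd.symm.trans hsmul
  obtain ⟨h₁, h₂⟩ := ENNReal.add_ne_top.1 (h ▸ ENNReal.ofNat_ne_top)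
  rw [← ENNReal.toReal_add h₁ h₂, h, ENNReal.toReal_ofNat]

theorem topsoeFun_le_klDivR_add_klDivR [IsProbabilityMeasure P₁] [IsProbabilityMeasure P₂]
    (hPbar : Pbar = (2 : ℝ≥0∞)⁻¹ • (P₁ + P₂)) :
    topsoeFun (2⁻¹ * ∫ x, |(P₁.rnDeriv Pbar x).toReal - (P₂.rnDeriv Pbar x).toReal| ∂Pbar) ≤
      klDivR P₁ Pbar + klDivR P₂ Pbar := by
  have := isProbabilityMeasure_midpoint hPbar
  set r₁ : X → ℝ := fun x => (P₁.rnDeriv Pbar x).toReal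
  set r₂ : X → ℝ := fun x => (P₂.rnDeriv Pbar x).toReal
  have hr₁ : Measurable r₁ := (Measure.measurable_rnDeriv _ _).ennreal_toReal
  have hr₂ : Measurable r₂ := (Measure.measurable_rnDeriv _ _).ennreal_toReal
  have hsum := toReal_rnDeriv_add_toReal_rnDeriv_midpoint hPbar
  have hr₁_mem : ∀ᵐ x ∂Pbar, r₁ x ∈ Icc 0 2 := by
    filter_upwards [hsum] with x hx
    exact ⟨ENNReal.toReal_nonneg, by linarith [ENNReal.toReal_nonneg (a := P₂.rnDeriv Pbar x)]⟩
  have hr₂_mem : ∀ᵐ x ∂Pbar, r₂ x ∈ Icc 0 2 := by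
    filter_upwards [hsum] with x hx
    exact ⟨ENNReal.toReal_nonneg, by linarith [ENNReal.toReal_nonneg (a := P₁.rnDeriv Pbar x)]⟩
  have hdev_mem : ∀ᵐ x ∂Pbar, |r₁ x - 1| ∈ Icc (-1) 1 := by
    filter_upwards [hr₁_mem] with x ⟨h0, h2⟩
    exact ⟨by linarith [abs_nonneg (r₁ x - 1)], abs_le.2 ⟨by linarith, by linarith⟩⟩
  have hdev : AEStronglyMeasurable (fun x => |r₁ x - 1|) Pbar :=
    (hr₁.sub_const 1).abs.aestronglyMeasurable
  have hdev_eq : ∀ᵐ x ∂Pbar, |r₁ x - 1| = 2⁻¹ * |r₁ x - r₂ x| := by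
    filter_upwards [hsum] with x hx
    rw [show r₁ x - r₂ x = 2 * (r₁ x - 1) by linarith, abs_mul, abs_two]
    ring
  calc topsoeFun (2⁻¹ * ∫ x, |r₁ x - r₂ x| ∂Pbar)
      = topsoeFun (∫ x, |r₁ x - 1| ∂Pbar) := by
        rw [← integral_const_mul, integral_congr_ae hdev_eq]
    _ ≤ ∫ x, topsoeFun |r₁ x - 1| ∂Pbar :=
        convexOn_topsoeFun.map_integral_le continuous_topsoeFun.continuousOn isClosed_Icc
          hdev_mem (continuous_id.integrable_comp_of_ae_mem_isCompact isCompact_Icc hdev hdev_mem)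
          (continuous_topsoeFun.integrable_comp_of_ae_mem_isCompact isCompact_Icc hdev hdev_mem)
    _ = ∫ x, r₁ x * log (r₁ x) + r₂ x * log (r₂ x) ∂Pbar := by
        refine integral_congr_ae ?_
        filter_upwards [hsum] with x hx
        exact (mul_log_add_mul_log_eq_topsoeFun hx).symm
    _ = klDivR P₁ Pbar + klDivR P₂ Pbar :=
        integral_add
          (continuous_mul_log.integrable_comp_of_ae_mem_isCompact isCompact_Icc
            hr₁.aestronglyMeasurable hr₁_mem)
          (continuous_mul_log.integrable_comp_of_ae_mem_isCompact isCompact_Icc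
            hr₂.aestronglyMeasurable hr₂_mem)

end Midpoint

/-- Topsøe's inequality: for probability measures `P₁, P₂` with total
variation distance `V` and `P̄ = (P₁+P₂)/2`,
`D(P₁‖P̄) + D(P₂‖P̄) ≥ (1+V) log(1+V) + (1-V) log(1-V)`.
(`Real.log 0 = 0` implements the convention `0 log 0 = 0`.) -/
theorem statement7 {X : Type*} [MeasurableSpace X] (μ : Measure X) [SigmaFinite μ]
    (p₁ p₂ : X → ℝ) (h₁m : Measurable p₁) (h₂m : Measurable p₂)
    (h₁0 : ∀ x, 0 ≤ p₁ x) (h₂0 : ∀ x, 0 ≤ p₂ x)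
    (P₁ P₂ : Measure X)
    (hP₁ : P₁ = μ.withDensity fun x => ENNReal.ofReal (p₁ x))
    (hP₂ : P₂ = μ.withDensity fun x => ENNReal.ofReal (p₂ x))
    [IsProbabilityMeasure P₁] [IsProbabilityMeasure P₂]
    (V : ℝ) (hV : V = 2⁻¹ * ∫ x, |p₁ x - p₂ x| ∂μ)
    (Pbar : Measure X) (hPbar : Pbar = (2 : ℝ≥0∞)⁻¹ • (P₁ + P₂)) :
    (1 + V) * Real.log (1 + V) + (1 - V) * Real.log (1 - V) ≤
      klDivR P₁ Pbar + klDivR P₂ Pbar := by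
  have := isProbabilityMeasure_midpoint hPbar
  have hac₁ : P₁ ≪ μ := hP₁ ▸ withDensity_absolutelyContinuous _ _
  have hac₂ : P₂ ≪ μ := hP₂ ▸ withDensity_absolutelyContinuous _ _
  have hacbar : Pbar ≪ μ := hPbar ▸ (hac₁.add_left hac₂).smul_left _
  have hV' : V = 2⁻¹ * ∫ x, |(P₁.rnDeriv Pbar x).toReal - (P₂.rnDeriv Pbar x).toReal| ∂Pbar := by
    rw [hV, integral_abs_sub_toReal_rnDeriv_eq_of_absolutelyContinuous
      (absolutelyContinuous_midpoint_left hPbar) (absolutelyContinuous_midpoint_right hPbar) hacbar]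
    congr 1
    refine integral_congr_ae ?_
    filter_upwards [hP₁ ▸ toReal_rnDeriv_withDensity_ofReal μ h₁m.aemeasurable (ae_of_all _ h₁0),
      hP₂ ▸ toReal_rnDeriv_withDensity_ofReal μ h₂m.aemeasurable (ae_of_all _ h₂0)] with x h₁ h₂
    rw [h₁, h₂]
  rw [hV']
  exact topsoeFun_le_klDivR_add_klDivR hPbar
end

section
/- Let F be a finite set of cardinality N ≥ 1 and let P_θ, θ∈F, be probability measures on a measurable space 𝒳 dominated by a σ-finite measure μ. Then the uniform-prior Bayes testing risk satisfies r̄ ≥ 1 − 1/N − (1/√N)·√( inf_Q Σ_{θ∈F} χ²(P_θ||Q) / N ), where the infimum is over all probability measures Q on 𝒳. -/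
open MeasureTheory Real
open scoped ENNReal NNReal

/-- The chi-squared divergence `χ²(P‖Q) = ∫ (dP/dQ)² dQ - 1` (real-valued; meaningful when
`P ≪ Q` and the integrand is integrable, in which case it agrees with the usual definition;
otherwise the usual `χ²` is `+∞` and the bound is trivially true). -/
noncomputable def chiSqDivR {X : Type*} [MeasurableSpace X] (P Q : Measure X) : ℝ :=
  ∫ x, (((P.rnDeriv Q x).toReal) ^ 2 - 1) ∂Q

/-! For a test `T` with acceptance regions `A_θ = {T = θ}`, write
`P_θ(A_θ) = Q(A_θ) + ∫_{A_θ} (dP_θ/dQ - 1) dQ`. Cauchy–Schwarz in `L²(Q)` bounds the correction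
by `√Q(A_θ) · √χ²(P_θ‖Q)`, and Cauchy–Schwarz over `θ` together with `∑_θ Q(A_θ) = 1` gives
`∑_θ P_θ(A_θ) ≤ 1 + √(∑_θ χ²(P_θ‖Q))`. The risk of `T` is `1 - (1/N) ∑_θ P_θ(A_θ)`. -/

theorem setIntegral_le_sqrt_measureReal_mul_sqrt_integral_sq {X : Type*} [MeasurableSpace X]
    {μ : Measure X} {A : Set X} (hA : μ A ≠ ∞) {g : X → ℝ} (hg : MemLp g 2 μ) :
    ∫ x in A, g x ∂μ ≤ √(μ.real A) * √(∫ x, g x ^ 2 ∂μ) := by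
  have : IsFiniteMeasure (μ.restrict A) := isFiniteMeasure_restrict.mpr hA
  have holder := integral_mul_le_Lp_mul_Lq_of_nonneg (μ := μ.restrict A)
    Real.HolderConjugate.two_two (f := fun _ => 1) (g := fun x => |g x|)
    (ae_of_all _ fun _ => zero_le_one) (ae_of_all _ fun _ => abs_nonneg _)
    (by simpa using memLp_const (1 : ℝ)) (by rw [ENNReal.ofReal_ofNat]; exact hg.abs.restrict A)
  simp only [one_mul, integral_const, smul_eq_mul, measureReal_restrict_apply_univ,
    ← Real.sqrt_eq_rpow, rpow_two, sq_abs, one_pow, mul_one] at holder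
  calc ∫ x in A, g x ∂μ ≤ ∫ x in A, |g x| ∂μ := (le_abs_self _).trans abs_integral_le_integral_abs
    _ ≤ √(μ.real A) * √(∫ x in A, g x ^ 2 ∂μ) := holder
    _ ≤ √(μ.real A) * √(∫ x, g x ^ 2 ∂μ) :=
      mul_le_mul_of_nonneg_left (sqrt_le_sqrt <| setIntegral_le_integral hg.integrable_sq <|
        ae_of_all _ fun _ => sq_nonneg _) (sqrt_nonneg _)

section ChiSquared

variable {X : Type*} [MeasurableSpace X] {P Q : Measure X} [IsProbabilityMeasure P]
  [IsProbabilityMeasure Q]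

theorem chiSqDivR_eq_integral_sq (hPQ : P ≪ Q)
    (hsq : Integrable (fun x => (P.rnDeriv Q x).toReal ^ 2) Q) :
    chiSqDivR P Q = ∫ x, ((P.rnDeriv Q x).toReal - 1) ^ 2 ∂Q := by
  have hint : Integrable (fun x => (P.rnDeriv Q x).toReal - 1) Q :=
    Measure.integrable_toReal_rnDeriv.sub (integrable_const 1)
  have hsq' : Integrable (fun x => (P.rnDeriv Q x).toReal ^ 2 - 1) Q :=
    hsq.sub (integrable_const 1)
  have hmean : ∫ x, ((P.rnDeriv Q x).toReal - 1) ∂Q = 0 := by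
    rw [integral_sub Measure.integrable_toReal_rnDeriv (integrable_const 1),
      Measure.integral_toReal_rnDeriv hPQ]
    simp
  calc chiSqDivR P Q
      = ∫ x, ((P.rnDeriv Q x).toReal ^ 2 - 1) ∂Q - 2 * ∫ x, ((P.rnDeriv Q x).toReal - 1) ∂Q := by
        rw [hmean, mul_zero, sub_zero, chiSqDivR]
    _ = ∫ x, ((P.rnDeriv Q x).toReal - 1) ^ 2 ∂Q := by
        rw [← integral_const_mul, ← integral_sub hsq' (hint.const_mul 2)]
        congr 1 with x
        ring

theorem chiSqDivR_nonneg (hPQ : P ≪ Q)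
    (hsq : Integrable (fun x => (P.rnDeriv Q x).toReal ^ 2) Q) : 0 ≤ chiSqDivR P Q := by
  rw [chiSqDivR_eq_integral_sq hPQ hsq]
  exact integral_nonneg fun _ => sq_nonneg _

theorem measureReal_le_add_sqrt_mul_sqrt_chiSqDivR (hPQ : P ≪ Q)
    (hsq : Integrable (fun x => (P.rnDeriv Q x).toReal ^ 2) Q) (A : Set X) :
    P.real A ≤ Q.real A + √(Q.real A) * √(chiSqDivR P Q) := by
  have hL2 : MemLp (fun x => (P.rnDeriv Q x).toReal - 1) 2 Q :=
    ((memLp_two_iff_integrable_sq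
      (Measure.measurable_rnDeriv P Q).ennreal_toReal.aestronglyMeasurable).mpr hsq).sub
      (memLp_const 1)
  calc P.real A = ∫ x in A, (P.rnDeriv Q x).toReal ∂Q :=
        (Measure.setIntegral_toReal_rnDeriv hPQ A).symm
    _ = Q.real A + ∫ x in A, ((P.rnDeriv Q x).toReal - 1) ∂Q := by
        rw [integral_sub Measure.integrable_toReal_rnDeriv.integrableOn (integrable_const 1)]
        simp
    _ ≤ Q.real A + √(Q.real A) * √(chiSqDivR P Q) := by
        rw [chiSqDivR_eq_integral_sq hPQ hsq]
        gcongr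
        exact setIntegral_le_sqrt_measureReal_mul_sqrt_integral_sq (measure_ne_top Q A) hL2

end ChiSquared

section Testing

variable {X F : Type*} [MeasurableSpace X] [Fintype F] {P : F → Measure X}
  [∀ θ, IsProbabilityMeasure (P θ)] {T : X → F}

theorem sum_measureReal_fiber_le_one_add_sqrt_sum_chiSqDivR {Q : Measure X}
    [IsProbabilityMeasure Q] (hT : ∀ θ, MeasurableSet {x | T x = θ}) (hPQ : ∀ θ, P θ ≪ Q)
    (hsq : ∀ θ, Integrable (fun x => ((P θ).rnDeriv Q x).toReal ^ 2) Q) :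
    ∑ θ, (P θ).real {x | T x = θ} ≤ 1 + √(∑ θ, chiSqDivR (P θ) Q) := by
  have hQ : ∑ θ, Q.real {x | T x = θ} = 1 := by
    have h := sum_measureReal_preimage_singleton (μ := Q) Finset.univ (fun θ _ => hT θ)
    rwa [Finset.coe_univ, Set.preimage_univ, probReal_univ] at h
  calc ∑ θ, (P θ).real {x | T x = θ}
      ≤ ∑ θ, (Q.real {x | T x = θ} + √(Q.real {x | T x = θ}) * √(chiSqDivR (P θ) Q)) :=
        Finset.sum_le_sum fun θ _ =>
          measureReal_le_add_sqrt_mul_sqrt_chiSqDivR (hPQ θ) (hsq θ) _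
    _ = 1 + ∑ θ, √(Q.real {x | T x = θ}) * √(chiSqDivR (P θ) Q) := by
        rw [Finset.sum_add_distrib, hQ]
    _ ≤ 1 + √(∑ θ, Q.real {x | T x = θ}) * √(∑ θ, chiSqDivR (P θ) Q) := by
        gcongr
        exact Real.sum_sqrt_mul_sqrt_le _ (fun _ => measureReal_nonneg)
          fun θ => chiSqDivR_nonneg (hPQ θ) (hsq θ)
    _ = 1 + √(∑ θ, chiSqDivR (P θ) Q) := by
        rw [hQ, sqrt_one, one_mul]

theorem inv_card_mul_sum_measureReal_ne_eq [Nonempty F]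
    (hT : ∀ θ, MeasurableSet {x | T x = θ}) :
    (Fintype.card F : ℝ)⁻¹ * ∑ θ, (P θ).real {x | T x ≠ θ} =
      1 - (Fintype.card F : ℝ)⁻¹ * ∑ θ, (P θ).real {x | T x = θ} := by
  have hcard : (Fintype.card F : ℝ) ≠ 0 := Nat.cast_ne_zero.mpr Fintype.card_ne_zero
  simp_rw [← Set.compl_ofPred, probReal_compl_eq_one_sub (hT _), Finset.sum_sub_distrib]
  simp [mul_sub, hcard]

end Testing

theorem statement8_general {X F : Type*} [MeasurableSpace X] [Fintype F] [Nonempty F]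
    (P : F → Measure X) (hPprob : ∀ θ, IsProbabilityMeasure (P θ))
    (N : ℝ) (hN : N = Fintype.card F)
    (Q : Measure X) [IsProbabilityMeasure Q]
    (hAC : ∀ θ, P θ ≪ Q)
    (hInt : ∀ θ, Integrable (fun x => ((P θ).rnDeriv Q x).toReal ^ 2) Q) :
    1 - 1 / N - (Real.sqrt N)⁻¹ * Real.sqrt ((∑ θ, chiSqDivR (P θ) Q) / N) ≤
      bayesRisk P := by
  have hN0 : 0 < N := hN ▸ Nat.cast_pos.mpr Fintype.card_pos
  have hbound : 1 - 1 / N - (√N)⁻¹ * √((∑ θ, chiSqDivR (P θ) Q) / N) =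
      1 - N⁻¹ * (1 + √(∑ θ, chiSqDivR (P θ) Q)) := by
    rw [sqrt_div' _ hN0.le, ← div_eq_inv_mul, div_div, ← sq, sq_sqrt hN0.le]
    ring
  have : Nonempty {T : X → F // ∀ θ, MeasurableSet {x | T x = θ}} :=
    ⟨⟨fun _ => Classical.arbitrary F, fun _ => MeasurableSet.const _⟩⟩
  refine hbound ▸ le_ciInf fun T =>
    le_of_le_of_eq ?_ (inv_card_mul_sum_measureReal_ne_eq T.2).symm
  rw [← hN]
  gcongr
  exact sum_measureReal_fiber_le_one_add_sqrt_sum_chiSqDivR T.2 hAC hInt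

/-- chi-squared lower bound, inequality (8):
`r̄ ≥ 1 - 1/N - (1/√N) √( inf_Q Σ_θ χ²(P_θ‖Q) / N )`; the infimum over `Q` is expressed by
universally quantifying over probability measures `Q` (the excluded `Q`'s give `χ² = +∞`). -/
theorem statement8 {X F : Type*} [MeasurableSpace X] [Fintype F] [Nonempty F]
    (μ : Measure X) [SigmaFinite μ]
    (P : F → Measure X) (hPdom : ∀ θ, P θ ≪ μ) (hPprob : ∀ θ, IsProbabilityMeasure (P θ))
    (N : ℝ) (hN : N = Fintype.card F)
    (Q : Measure X) [IsProbabilityMeasure Q]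
    (hAC : ∀ θ, P θ ≪ Q)
    (hInt : ∀ θ, Integrable (fun x => ((P θ).rnDeriv Q x).toReal ^ 2) Q) :
    1 - 1 / N - (Real.sqrt N)⁻¹ * Real.sqrt ((∑ θ, chiSqDivR (P θ) Q) / N) ≤
      bayesRisk P :=
  statement8_general P hPprob N hN Q hAC hInt
end

section
/- Let F be a finite set of cardinality N ≥ 2 and let P_θ, θ∈F, be probability measures on a measurable space 𝒳 dominated by a σ-finite measure μ with densities p_θ. Define h² := (1/N²) Σ_{θ,θ'∈F} H²(P_θ, P_{θ'}), where H² denotes squared Hellinger distance. Then the uniform-prior Bayes testing risk satisfies r̄ ≥ 1 − 1/N − ((N−2)/N)·(h²/2) − (√(N−1)/N)·√( h²(2−h²) ). -/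
open MeasureTheory Real
open scoped ENNReal NNReal

section FiniteSums

variable {F : Type*} [Fintype F]

theorem card_mul_sq_le_of_sum_eq_zero {d : F → ℝ} (hd : ∑ j, d j = 0) (i : F) :
    Fintype.card F * d i ^ 2 ≤ (Fintype.card F - 1) * ∑ j, d j ^ 2 := by
  classical
  have hrest : ∑ j ∈ Finset.univ.erase i, d j = -d i := by
    rw [Finset.sum_erase_eq_sub (Finset.mem_univ i), hd, zero_sub]
  have hcard : ((Finset.univ.erase i).card : ℝ) = Fintype.card F - 1 := by
    rw [Finset.card_erase_of_mem (Finset.mem_univ i), Finset.card_univ,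
      Nat.cast_sub (Fintype.card_pos_iff.2 ⟨i⟩), Nat.cast_one]
  have hCS := sq_sum_le_card_mul_sum_sq (s := Finset.univ.erase i) (f := d)
  rw [hrest, hcard, Finset.sum_erase_eq_sub (Finset.mem_univ i)] at hCS
  nlinarith

theorem sum_sum_sub_sq_eq (a : F → ℝ) :
    ∑ i, ∑ j, (a i - a j) ^ 2 = 2 * (Fintype.card F * ∑ i, a i ^ 2 - (∑ i, a i) ^ 2) := by
  simp only [sub_sq, Finset.sum_add_distrib, Finset.sum_sub_distrib, Finset.sum_const,
    Finset.card_univ, nsmul_eq_mul, ← Finset.mul_sum, ← Finset.sum_mul, sq (∑ i, a i)]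
  ring

/-- Samuelson's inequality. -/
theorem le_mean_add_sqrt (a : F → ℝ) (i : F) :
    a i ≤ (Fintype.card F : ℝ)⁻¹ * ∑ j, a j +
      √((Fintype.card F - 1) / 2 * ((Fintype.card F : ℝ) ^ 2)⁻¹ * ∑ j, ∑ k, (a j - a k) ^ 2) := by
  set N : ℝ := (Fintype.card F : ℝ)
  have hN : 0 < N := Nat.cast_pos.2 (Fintype.card_pos_iff.2 ⟨i⟩)
  set d : F → ℝ := fun j => N * a j - ∑ k, a k
  have hd : ∑ j, d j = 0 := by
    simp only [d, Finset.sum_sub_distrib, ← Finset.mul_sum, Finset.sum_const, Finset.card_univ,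
      nsmul_eq_mul]
    ring
  have hd2 : ∑ j, d j ^ 2 = N / 2 * ∑ j, ∑ k, (a j - a k) ^ 2 := by
    rw [sum_sum_sub_sq_eq]
    simp only [d, sub_sq, Finset.sum_add_distrib, Finset.sum_sub_distrib, Finset.sum_const,
      Finset.card_univ, nsmul_eq_mul, mul_pow, ← Finset.mul_sum, ← Finset.sum_mul]
    ring
  have hsq : (a i - N⁻¹ * ∑ j, a j) ^ 2 ≤
      (N - 1) / 2 * (N ^ 2)⁻¹ * ∑ j, ∑ k, (a j - a k) ^ 2 := by
    have h := card_mul_sq_le_of_sum_eq_zero hd i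
    rw [hd2] at h
    have hdi : a i - N⁻¹ * ∑ j, a j = d i / N := by
      simp only [d]; field_simp
    rw [hdi, div_pow, div_le_iff₀ (by positivity)]
    field_simp
    nlinarith
  linarith [le_abs_self (a i - N⁻¹ * ∑ j, a j), abs_le_sqrt hsq]

end FiniteSums

section Integrals

variable {X : Type*} [MeasurableSpace X] {μ : Measure X}

theorem integrable_sqrt_sub_sqrt_sq {f g : X → ℝ} (hf : Integrable f μ) (hg : Integrable g μ)
    (hf0 : ∀ x, 0 ≤ f x) (hg0 : ∀ x, 0 ≤ g x) :
    Integrable (fun x => (√(f x) - √(g x)) ^ 2) μ := by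
  refine (hf.add hg).mono' (((continuous_sqrt.comp_aestronglyMeasurable hf.1).sub
    (continuous_sqrt.comp_aestronglyMeasurable hg.1)).pow 2) (ae_of_all _ fun x => ?_)
  rw [Real.norm_of_nonneg (sq_nonneg _), sub_sq, sq_sqrt (hf0 x), sq_sqrt (hg0 x)]
  have := mul_nonneg (sqrt_nonneg (f x)) (sqrt_nonneg (g x))
  simp only [Pi.add_apply]
  linarith

theorem integral_mul_le_sqrt_mul_sqrt {f g : X → ℝ} (hf : MemLp f 2 μ) (hg : MemLp g 2 μ) :
    ∫ x, f x * g x ∂μ ≤ √(∫ x, f x ^ 2 ∂μ) * √(∫ x, g x ^ 2 ∂μ) := by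
  have h2 : ENNReal.ofReal 2 = 2 := by norm_num
  calc ∫ x, f x * g x ∂μ ≤ ∫ x, |f x| * |g x| ∂μ :=
        integral_mono (hf.integrable_mul hg) (hf.abs.integrable_mul hg.abs)
          fun x => (abs_mul (f x) (g x)).symm ▸ le_abs_self _
    _ ≤ (∫ x, |f x| ^ (2 : ℝ) ∂μ) ^ (1 / (2 : ℝ)) * (∫ x, |g x| ^ (2 : ℝ) ∂μ) ^ (1 / (2 : ℝ)) :=
        integral_mul_le_Lp_mul_Lq_of_nonneg Real.HolderConjugate.two_two
          (ae_of_all _ fun x => abs_nonneg _) (ae_of_all _ fun x => abs_nonneg _)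
          (h2 ▸ hf.abs) (h2 ▸ hg.abs)
    _ = √(∫ x, f x ^ 2 ∂μ) * √(∫ x, g x ^ 2 ∂μ) := by
        simp only [rpow_two, sq_abs, ← sqrt_eq_rpow]

theorem integral_add_sq_le {f g : X → ℝ} (hf : MemLp f 2 μ) (hg : MemLp g 2 μ) :
    ∫ x, (f x + g x) ^ 2 ∂μ ≤ (√(∫ x, f x ^ 2 ∂μ) + √(∫ x, g x ^ 2 ∂μ)) ^ 2 := by
  have hfg := integral_mul_le_sqrt_mul_sqrt hf hg
  have hf0 : 0 ≤ ∫ x, f x ^ 2 ∂μ := integral_nonneg fun x => sq_nonneg _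
  have hg0 : 0 ≤ ∫ x, g x ^ 2 ∂μ := integral_nonneg fun x => sq_nonneg _
  have hexp : ∫ x, (f x + g x) ^ 2 ∂μ
      = ∫ x, f x ^ 2 ∂μ + 2 * ∫ x, f x * g x ∂μ + ∫ x, g x ^ 2 ∂μ := by
    have hfg2 : Integrable (fun x => 2 * (f x * g x)) μ := (hf.integrable_mul hg).const_mul 2
    simp only [add_sq, mul_assoc]
    rw [integral_add ?_ hg.integrable_sq, integral_add hf.integrable_sq hfg2, integral_const_mul]
    exact hf.integrable_sq.add hfg2
  rw [hexp, add_sq, sq_sqrt hf0, sq_sqrt hg0]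
  linarith

theorem memLp_two_sqrt {f : X → ℝ} (hf : Integrable f μ) (hf0 : ∀ x, 0 ≤ f x) :
    MemLp (fun x => √(f x)) 2 μ :=
  (memLp_two_iff_integrable_sq (continuous_sqrt.comp_aestronglyMeasurable hf.1)).2
    (hf.congr (ae_of_all _ fun x => (sq_sqrt (hf0 x)).symm))

theorem toReal_withDensity_ofReal_apply {f : X → ℝ} (hf : AEStronglyMeasurable f μ)
    (hf0 : ∀ x, 0 ≤ f x) {s : Set X} (hs : MeasurableSet s) :
    (μ.withDensity (fun x => ENNReal.ofReal (f x)) s).toReal = ∫ x in s, f x ∂μ := by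
  rw [withDensity_apply _ hs, integral_eq_lintegral_of_nonneg_ae (ae_of_all _ hf0) hf.restrict]

theorem integrable_of_isFiniteMeasure_withDensity {f : X → ℝ} (hf : AEStronglyMeasurable f μ)
    (hf0 : ∀ x, 0 ≤ f x) [IsFiniteMeasure (μ.withDensity fun x => ENNReal.ofReal (f x))] :
    Integrable f μ := by
  refine ⟨hf, (hasFiniteIntegral_iff_ofReal (ae_of_all _ hf0)).2 ?_⟩
  rw [← setLIntegral_univ, ← withDensity_apply _ MeasurableSet.univ]
  exact measure_lt_top _ _

end Integrals

section Testing

variable {X F : Type*} [MeasurableSpace X] [Fintype F]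

theorem one_sub_div_card_le_bayesRisk [Nonempty F] {P : F → Measure X}
    [∀ θ, IsProbabilityMeasure (P θ)] {S : ℝ}
    (hS : ∀ T : X → F, (∀ θ, MeasurableSet {x | T x = θ}) →
      ∑ θ, (P θ {x | T x = θ}).toReal ≤ S) :
    1 - S / Fintype.card F ≤ bayesRisk P := by
  have : Nonempty {T : X → F // ∀ θ, MeasurableSet {x | T x = θ}} :=
    ⟨⟨fun _ => Classical.arbitrary F, fun θ => MeasurableSet.const _⟩⟩
  refine le_ciInf fun T => ?_
  have hN : (0 : ℝ) < Fintype.card F := Nat.cast_pos.2 Fintype.card_pos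
  have hmiss : ∀ θ, (P θ {x | T.1 x ≠ θ}).toReal = 1 - (P θ {x | T.1 x = θ}).toReal :=
    fun θ => probReal_compl_eq_one_sub (T.2 θ)
  rw [Finset.sum_congr rfl fun θ _ => hmiss θ, Finset.sum_sub_distrib, Finset.sum_const,
    Finset.card_univ, nsmul_eq_mul, mul_one, inv_mul_eq_div, sub_div, div_self hN.ne']
  gcongr
  exact hS T.1 T.2

theorem sum_withDensity_fiber_le_integral {μ : Measure X} {p : F → X → ℝ}
    (hp_int : ∀ θ, Integrable (p θ) μ) (hp_nonneg : ∀ θ x, 0 ≤ p θ x) {B : X → ℝ}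
    (hB : Integrable B μ) (hpB : ∀ θ x, p θ x ≤ B x) {T : X → F}
    (hT : ∀ θ, MeasurableSet {x | T x = θ}) :
    ∑ θ, (μ.withDensity (fun x => ENNReal.ofReal (p θ x)) {x | T x = θ}).toReal ≤
      ∫ x, B x ∂μ := by
  have hcover : ⋃ θ, {x | T x = θ} = Set.univ := Set.iUnion_eq_univ_iff.2 fun x => ⟨T x, rfl⟩
  calc ∑ θ, (μ.withDensity (fun x => ENNReal.ofReal (p θ x)) {x | T x = θ}).toReal
      = ∑ θ, ∫ x in {x | T x = θ}, p θ x ∂μ :=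
        Finset.sum_congr rfl fun θ _ =>
          toReal_withDensity_ofReal_apply (hp_int θ).1 (hp_nonneg θ) (hT θ)
    _ ≤ ∑ θ, ∫ x in {x | T x = θ}, B x ∂μ :=
        Finset.sum_le_sum fun θ _ => setIntegral_mono_on (hp_int θ).integrableOn
          hB.integrableOn (hT θ) fun x _ => hpB θ x
    _ = ∫ x, B x ∂μ := by
        rw [← integral_iUnion_fintype hT
          (fun θ θ' h => Set.disjoint_left.2 fun x hx hx' => h (hx.symm.trans hx'))
          fun _ => hB.integrableOn, hcover, setIntegral_univ]

end Testing

section HellingerAverage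

variable {X F : Type*} [MeasurableSpace X] [Fintype F] {μ : Measure X} {p : F → X → ℝ}

noncomputable def avgHellingerSq (μ : Measure X) (p : F → X → ℝ) : ℝ :=
  ((Fintype.card F : ℝ) ^ 2)⁻¹ * ∑ θ, ∑ θ', ∫ x, (√(p θ x) - √(p θ' x)) ^ 2 ∂μ

theorem integrable_sum_sum_sqrt_sub_sq (hp_int : ∀ θ, Integrable (p θ) μ)
    (hp_nonneg : ∀ θ x, 0 ≤ p θ x) :
    Integrable (fun x => ∑ θ, ∑ θ', (√(p θ x) - √(p θ' x)) ^ 2) μ :=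
  integrable_finsetSum _ fun θ _ => integrable_finsetSum _ fun θ' _ =>
    integrable_sqrt_sub_sqrt_sq (hp_int θ) (hp_int θ') (hp_nonneg θ) (hp_nonneg θ')

theorem integral_sum_sum_sqrt_sub_sq [Nonempty F] (hp_int : ∀ θ, Integrable (p θ) μ)
    (hp_nonneg : ∀ θ x, 0 ≤ p θ x) :
    ∫ x, ∑ θ, ∑ θ', (√(p θ x) - √(p θ' x)) ^ 2 ∂μ =
      (Fintype.card F : ℝ) ^ 2 * avgHellingerSq μ p := by
  have hN : (Fintype.card F : ℝ) ^ 2 ≠ 0 := by positivity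
  rw [avgHellingerSq, mul_inv_cancel_left₀ hN, integral_finsetSum _ fun θ _ =>
    integrable_finsetSum _ fun θ' _ =>
      integrable_sqrt_sub_sqrt_sq (hp_int θ) (hp_int θ') (hp_nonneg θ) (hp_nonneg θ')]
  exact Finset.sum_congr rfl fun θ _ => integral_finsetSum _ fun θ' _ =>
    integrable_sqrt_sub_sqrt_sq (hp_int θ) (hp_int θ') (hp_nonneg θ) (hp_nonneg θ')

theorem integral_sq_mean_sqrt [Nonempty F] (hp_int : ∀ θ, Integrable (p θ) μ)
    (hp_nonneg : ∀ θ x, 0 ≤ p θ x) (hp_one : ∀ θ, ∫ x, p θ x ∂μ = 1) :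
    ∫ x, ((Fintype.card F : ℝ)⁻¹ * ∑ θ, √(p θ x)) ^ 2 ∂μ = 1 - avgHellingerSq μ p / 2 := by
  set N : ℝ := (Fintype.card F : ℝ)
  have hN : 0 < N := Nat.cast_pos.2 Fintype.card_pos
  have hpt : ∀ x, (N⁻¹ * ∑ θ, √(p θ x)) ^ 2 =
      N⁻¹ * ∑ θ, p θ x - (N ^ 2)⁻¹ / 2 * ∑ θ, ∑ θ', (√(p θ x) - √(p θ' x)) ^ 2 := by
    intro x
    rw [sum_sum_sub_sq_eq]
    simp only [sq_sqrt (hp_nonneg _ x)]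
    field_simp
    ring
  simp_rw [hpt]
  rw [integral_sub ((integrable_finsetSum _ fun θ _ => hp_int θ).const_mul _)
      ((integrable_sum_sum_sqrt_sub_sq hp_int hp_nonneg).const_mul _),
    integral_const_mul, integral_const_mul, integral_finsetSum _ fun θ _ => hp_int θ,
    integral_sum_sum_sqrt_sub_sq hp_int hp_nonneg]
  simp only [hp_one, Finset.sum_const, Finset.card_univ, nsmul_eq_mul, mul_one, N]
  field_simp

theorem exists_dominating_integral_le [Nonempty F] (hp_int : ∀ θ, Integrable (p θ) μ)
    (hp_nonneg : ∀ θ x, 0 ≤ p θ x) (hp_one : ∀ θ, ∫ x, p θ x ∂μ = 1) :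
    ∃ B : X → ℝ, Integrable B μ ∧ (∀ θ x, p θ x ≤ B x) ∧
      ∫ x, B x ∂μ ≤ (√(1 - avgHellingerSq μ p / 2) +
        √((Fintype.card F - 1) / 2 * avgHellingerSq μ p)) ^ 2 := by
  set N : ℝ := (Fintype.card F : ℝ)
  have hN : 1 ≤ N := Nat.one_le_cast.2 Fintype.card_pos
  set c : ℝ := (N - 1) / 2 * (N ^ 2)⁻¹
  have hc : 0 ≤ c := by positivity
  set D : X → ℝ := fun x => ∑ θ, ∑ θ', (√(p θ x) - √(p θ' x)) ^ 2
  have hD : Integrable D μ := integrable_sum_sum_sqrt_sub_sq hp_int hp_nonneg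
  have hcD : ∀ x, 0 ≤ c * D x := fun x =>
    mul_nonneg hc (Finset.sum_nonneg fun _ _ => Finset.sum_nonneg fun _ _ => sq_nonneg _)
  have hm : MemLp (fun x => N⁻¹ * ∑ θ, √(p θ x)) 2 μ :=
    (memLp_finsetSum _ fun θ _ => memLp_two_sqrt (hp_int θ) (hp_nonneg θ)).const_mul _
  have hg : MemLp (fun x => √(c * D x)) 2 μ := memLp_two_sqrt (hD.const_mul c) hcD
  refine ⟨fun x => (N⁻¹ * ∑ θ, √(p θ x) + √(c * D x)) ^ 2, (hm.add hg).integrable_sq,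
    fun θ x => ?_, ?_⟩
  · rw [← sq_sqrt (hp_nonneg θ x)]
    exact pow_le_pow_left₀ (sqrt_nonneg _) (le_mean_add_sqrt (fun θ => √(p θ x)) θ) 2
  · have hg2 : ∫ x, √(c * D x) ^ 2 ∂μ = (N - 1) / 2 * avgHellingerSq μ p := by
      simp_rw [sq_sqrt (hcD _)]
      rw [integral_const_mul, integral_sum_sum_sqrt_sub_sq hp_int hp_nonneg]
      simp only [c, N]
      field_simp
    calc _ ≤ _ := integral_add_sq_le hm hg
      _ = _ := by rw [integral_sq_mean_sqrt hp_int hp_nonneg hp_one, hg2]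

theorem avgHellingerSq_nonneg : 0 ≤ avgHellingerSq μ p :=
  mul_nonneg (by positivity) (Finset.sum_nonneg fun _ _ => Finset.sum_nonneg fun _ _ =>
    integral_nonneg fun _ => sq_nonneg _)

theorem avgHellingerSq_le_two [Nonempty F] (hp_int : ∀ θ, Integrable (p θ) μ)
    (hp_nonneg : ∀ θ x, 0 ≤ p θ x) (hp_one : ∀ θ, ∫ x, p θ x ∂μ = 1) :
    avgHellingerSq μ p ≤ 2 := by
  have h0 : 0 ≤ ∫ x, ((Fintype.card F : ℝ)⁻¹ * ∑ θ, √(p θ x)) ^ 2 ∂μ :=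
    integral_nonneg fun x => sq_nonneg _
  linarith [integral_sq_mean_sqrt hp_int hp_nonneg hp_one]

end HellingerAverage

theorem one_sub_sqrt_add_sqrt_sq_div {N h : ℝ} (hN : 1 ≤ N) (h0 : 0 ≤ h) (h2 : h ≤ 2) :
    1 - (√(1 - h / 2) + √((N - 1) / 2 * h)) ^ 2 / N =
      1 - 1 / N - ((N - 2) / N) * (h / 2) - (√(N - 1) / N) * √(h * (2 - h)) := by
  have hA : 0 ≤ 1 - h / 2 := by linarith
  have hC : 0 ≤ (N - 1) / 2 * h := mul_nonneg (by linarith) h0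
  have hcross : 2 * (√(1 - h / 2) * √((N - 1) / 2 * h)) = √(N - 1) * √(h * (2 - h)) := by
    rw [← sqrt_mul hA, ← sqrt_mul (sub_nonneg.2 hN), show (N - 1) * (h * (2 - h)) =
      2 ^ 2 * ((1 - h / 2) * ((N - 1) / 2 * h)) by ring, sqrt_mul (sq_nonneg 2),
      sqrt_sq zero_le_two]
  rw [add_sq, sq_sqrt hA, sq_sqrt hC, mul_assoc 2, hcross]
  field_simp
  ring

theorem statement10_general {X F : Type*} [MeasurableSpace X] [Fintype F]
    (μ : Measure X)
    (p : F → X → ℝ) (hp_meas : ∀ θ, Measurable (p θ)) (hp_nonneg : ∀ θ x, 0 ≤ p θ x)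
    (P : F → Measure X)
    (hP : ∀ θ, P θ = μ.withDensity (fun x => ENNReal.ofReal (p θ x)))
    (hPprob : ∀ θ, IsProbabilityMeasure (P θ))
    (N : ℝ) (hN : N = Fintype.card F) (hN2 : 2 ≤ N)
    (hsq : ℝ)
    (h_hsq : hsq = (N ^ 2)⁻¹ *
      ∑ θ, ∑ θ', ∫ x, (Real.sqrt (p θ x) - Real.sqrt (p θ' x)) ^ 2 ∂μ) :
    1 - 1 / N - ((N - 2) / N) * (hsq / 2) -
        (Real.sqrt (N - 1) / N) * Real.sqrt (hsq * (2 - hsq)) ≤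
      bayesRisk P := by
  obtain rfl : P = fun θ => μ.withDensity fun x => ENNReal.ofReal (p θ x) := funext hP
  subst hN
  obtain rfl : hsq = avgHellingerSq μ p := h_hsq
  have : Nonempty F :=
    Fintype.card_pos_iff.1 (by exact_mod_cast (by linarith : (0 : ℝ) < Fintype.card F))
  have hp_int θ : Integrable (p θ) μ :=
    integrable_of_isFiniteMeasure_withDensity (hp_meas θ).aestronglyMeasurable (hp_nonneg θ)
  have hp_one θ : ∫ x, p θ x ∂μ = 1 := by
    rw [← setIntegral_univ, ← toReal_withDensity_ofReal_apply (hp_meas θ).aestronglyMeasurable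
      (hp_nonneg θ) MeasurableSet.univ, measure_univ, ENNReal.toReal_one]
  obtain ⟨B, hB, hpB, hB_le⟩ := exists_dominating_integral_le hp_int hp_nonneg hp_one
  rw [← one_sub_sqrt_add_sqrt_sq_div (by linarith) avgHellingerSq_nonneg
    (avgHellingerSq_le_two hp_int hp_nonneg hp_one)]
  calc _ ≤ 1 - (∫ x, B x ∂μ) / Fintype.card F := by gcongr
    _ ≤ bayesRisk _ := one_sub_div_card_le_bayesRisk fun T hT =>
        sum_withDensity_fiber_le_integral hp_int hp_nonneg hB hpB hT

/-- Hellinger lower bound, Example 3: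
with `h² := (1/N²) Σ_{θ,θ'} H²(P_θ, P_θ')`, where `H²(P,Q) = ∫ (√p - √q)² dμ`,
`r̄ ≥ 1 - 1/N - ((N-2)/N) h²/2 - (√(N-1)/N) √(h²(2-h²))`. -/
theorem statement10 {X F : Type*} [MeasurableSpace X] [Fintype F]
    (μ : Measure X) [SigmaFinite μ]
    (p : F → X → ℝ) (hp_meas : ∀ θ, Measurable (p θ)) (hp_nonneg : ∀ θ x, 0 ≤ p θ x)
    (P : F → Measure X)
    (hP : ∀ θ, P θ = μ.withDensity (fun x => ENNReal.ofReal (p θ x)))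
    (hPprob : ∀ θ, IsProbabilityMeasure (P θ))
    (N : ℝ) (hN : N = Fintype.card F) (hN2 : 2 ≤ N)
    (hsq : ℝ)
    (h_hsq : hsq = (N ^ 2)⁻¹ *
      ∑ θ, ∑ θ', ∫ x, (Real.sqrt (p θ x) - Real.sqrt (p θ' x)) ^ 2 ∂μ) :
    1 - 1 / N - ((N - 2) / N) * (hsq / 2) -
        (Real.sqrt (N - 1) / N) * Real.sqrt (hsq * (2 - hsq)) ≤
      bayesRisk P :=
  statement10_general μ p hp_meas hp_nonneg P hP hPprob N hN hN2 hsq h_hsq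
end

section
/- Let P₁ and P₂ be probability measures on a measurable space with total variation distance V. Then V ≤ √( 1 − exp( − inf_Q ( D(Q||P₁) + D(Q||P₂) ) ) ), where the infimum is over all probability measures Q and D denotes the Kullback-Leibler divergence. -/
/-!
Let `B = ∫ √(p₁ p₂) dμ` be the Bhattacharyya coefficient of `P₁` and `P₂`. Since
`√(p₁ p₂) = √(min p₁ p₂) · √(max p₁ p₂)` and `∫ min = 1 - V`, `∫ max = 1 + V`, the
Cauchy–Schwarz inequality gives `B² ≤ 1 - V²` (Le Cam). On the other hand, Jensen's inequality
for `exp` under `Q` gives `exp (-(D(Q‖P₁) + D(Q‖P₂)) / 2) ≤ ∫ (dQ/dP₁ · dQ/dP₂)^(-1/2) dQ`, and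
the right-hand side is `∫ √(p₁ p₂) dμ` restricted to `{dQ/dμ > 0}`, hence at most `B`.
Squaring and combining the two bounds gives `V² ≤ 1 - exp (-(D(Q‖P₁) + D(Q‖P₂)))`.
-/

open MeasureTheory Real
open scoped ENNReal NNReal

section Densities

variable {X : Type*} [MeasurableSpace X] {μ P : Measure X} {p : X → ℝ}

lemma integrable_of_isProbabilityMeasure_withDensity [IsProbabilityMeasure P]
    (hm : Measurable p) (h0 : ∀ x, 0 ≤ p x)
    (hP : P = μ.withDensity fun x => ENNReal.ofReal (p x)) : Integrable p μ := by
  refine ⟨hm.aestronglyMeasurable, ?_⟩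
  rw [hasFiniteIntegral_iff_ofReal (.of_forall h0), ← setLIntegral_univ,
    ← withDensity_apply _ .univ, ← hP, measure_univ]
  exact ENNReal.one_lt_top

lemma integral_eq_one_of_isProbabilityMeasure_withDensity [IsProbabilityMeasure P]
    (hm : Measurable p) (h0 : ∀ x, 0 ≤ p x)
    (hP : P = μ.withDensity fun x => ENNReal.ofReal (p x)) : ∫ x, p x ∂μ = 1 := by
  rw [integral_eq_lintegral_of_nonneg_ae (.of_forall h0) hm.aestronglyMeasurable,
    ← setLIntegral_univ, ← withDensity_apply _ .univ, ← hP, measure_univ, ENNReal.toReal_one]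

lemma toReal_rnDeriv_mul_density_ae_eq [SigmaFinite μ] [SigmaFinite P] {Q : Measure X}
    [SigmaFinite Q] (hm : Measurable p) (h0 : ∀ x, 0 ≤ p x)
    (hP : P = μ.withDensity fun x => ENNReal.ofReal (p x)) (hQ : Q ≪ P) :
    ∀ᵐ x ∂μ, (Q.rnDeriv P x).toReal * p x = (Q.rnDeriv μ x).toReal := by
  have hdens : P.rnDeriv μ =ᵐ[μ] fun x => ENNReal.ofReal (p x) :=
    hP ▸ Measure.rnDeriv_withDensity μ hm.ennreal_ofReal
  filter_upwards [Measure.rnDeriv_mul_rnDeriv (κ := μ) hQ, hdens] with x hchain hx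
  rw [← hchain, Pi.mul_apply, hx, ENNReal.toReal_mul, ENNReal.toReal_ofReal (h0 x)]

end Densities

section Bhattacharyya

variable {X : Type*} [MeasurableSpace X] {μ : Measure X} {f g : X → ℝ}

lemma integrable_sqrt_mul (hf : Integrable f μ) (hg : Integrable g μ)
    (hf0 : ∀ x, 0 ≤ f x) (hg0 : ∀ x, 0 ≤ g x) :
    Integrable (fun x => √(f x * g x)) μ := by
  refine (hf.add hg).mono' (hf.aemeasurable.mul hg.aemeasurable).sqrt.aestronglyMeasurable
    (.of_forall fun x => ?_)
  rw [Real.norm_of_nonneg (Real.sqrt_nonneg _), Pi.add_apply,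
    Real.sqrt_le_left (add_nonneg (hf0 x) (hg0 x))]
  nlinarith [hf0 x, hg0 x]

lemma integral_sqrt_mul_le (hf : Integrable f μ) (hg : Integrable g μ)
    (hf0 : ∀ x, 0 ≤ f x) (hg0 : ∀ x, 0 ≤ g x) :
    ∫ x, √(f x * g x) ∂μ ≤ √(∫ x, f x ∂μ) * √(∫ x, g x ∂μ) := by
  have hL2 {u : X → ℝ} (hu : Integrable u μ) (hu0 : ∀ x, 0 ≤ u x) :
      MemLp (fun x => √(u x)) (ENNReal.ofReal 2) μ := by
    rw [ENNReal.ofReal_ofNat, memLp_two_iff_integrable_sq hu.aemeasurable.sqrt.aestronglyMeasurable]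
    simpa only [Real.sq_sqrt (hu0 _)] using hu
  have hsq {u : X → ℝ} (hu0 : ∀ x, 0 ≤ u x) : ∫ x, √(u x) ^ (2 : ℝ) ∂μ = ∫ x, u x ∂μ := by
    simp only [Real.rpow_two, Real.sq_sqrt (hu0 _)]
  have := integral_mul_le_Lp_mul_Lq_of_nonneg Real.HolderConjugate.two_two
    (.of_forall fun x => Real.sqrt_nonneg (f x)) (.of_forall fun x => Real.sqrt_nonneg (g x))
    (hL2 hf hf0) (hL2 hg hg0)
  simpa only [← Real.sqrt_mul (hf0 _), hsq hf0, hsq hg0, ← Real.sqrt_eq_rpow] using this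

lemma sq_integral_sqrt_mul_add_sq_le_one (hf : Integrable f μ) (hg : Integrable g μ)
    (hf0 : ∀ x, 0 ≤ f x) (hg0 : ∀ x, 0 ≤ g x) (hf1 : ∫ x, f x ∂μ = 1) (hg1 : ∫ x, g x ∂μ = 1) :
    (∫ x, √(f x * g x) ∂μ) ^ 2 + (2⁻¹ * ∫ x, |f x - g x| ∂μ) ^ 2 ≤ 1 := by
  have hmin : Integrable (fun x => min (f x) (g x)) μ := hf.inf hg
  have hmax : Integrable (fun x => max (f x) (g x)) μ := hf.sup hg
  have hsum : ∫ x, min (f x) (g x) ∂μ + ∫ x, max (f x) (g x) ∂μ = 2 := by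
    simp only [← integral_add hmin hmax, min_add_max, integral_add hf hg, hf1, hg1]
    norm_num
  have hdiff : ∫ x, max (f x) (g x) ∂μ - ∫ x, min (f x) (g x) ∂μ = ∫ x, |f x - g x| ∂μ := by
    simp only [← integral_sub hmax hmin, max_sub_min_eq_abs']
  have hCS : ∫ x, √(f x * g x) ∂μ
      ≤ √(∫ x, min (f x) (g x) ∂μ) * √(∫ x, max (f x) (g x) ∂μ) := by
    simpa only [min_mul_max] using integral_sqrt_mul_le hmin hmax
      (fun x => le_min (hf0 x) (hg0 x)) (fun x => (hf0 x).trans (le_max_left _ _))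
  have hB0 : 0 ≤ ∫ x, √(f x * g x) ∂μ := integral_nonneg fun x => Real.sqrt_nonneg _
  have hmin0 : 0 ≤ ∫ x, min (f x) (g x) ∂μ := integral_nonneg fun x => le_min (hf0 x) (hg0 x)
  have hmax0 : 0 ≤ ∫ x, max (f x) (g x) ∂μ :=
    integral_nonneg fun x => (hf0 x).trans (le_max_left _ _)
  have hsq := pow_le_pow_left₀ hB0 hCS 2
  rw [mul_pow, Real.sq_sqrt hmin0, Real.sq_sqrt hmax0] at hsq
  nlinarith

end Bhattacharyya

lemma mul_exp_neg_half_log_add_log_le_sqrt {r₁ r₂ p₁ p₂ q : ℝ} (hp₁ : 0 ≤ p₁) (hp₂ : 0 ≤ p₂)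
    (h₁ : r₁ * p₁ = q) (h₂ : r₂ * p₂ = q) :
    q * exp (-(log r₁ + log r₂) / 2) ≤ √(p₁ * p₂) := by
  rcases le_or_gt q 0 with hq | hq
  · exact (mul_nonpos_of_nonpos_of_nonneg hq (exp_pos _).le).trans (Real.sqrt_nonneg _)
  have hr₁ : 0 < r₁ := pos_of_mul_pos_left (h₁ ▸ hq) hp₁
  have hr₂ : 0 < r₂ := pos_of_mul_pos_left (h₂ ▸ hq) hp₂
  have hexp : exp (-(log r₁ + log r₂) / 2) = √((r₁ * r₂)⁻¹) := by
    rw [Real.exp_half, Real.exp_neg, ← Real.log_mul hr₁.ne' hr₂.ne',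
      Real.exp_log (mul_pos hr₁ hr₂)]
  have hq2 : q ^ 2 = p₁ * p₂ * (r₁ * r₂) := by
    linear_combination -q * h₁ - r₁ * p₁ * h₂
  rw [hexp, ← Real.sqrt_sq hq.le, ← Real.sqrt_mul (sq_nonneg _), hq2,
    mul_inv_cancel_right₀ (mul_pos hr₁ hr₂).ne']

section KullbackLeibler

variable {X : Type*} [MeasurableSpace X] {μ P₁ P₂ Q : Measure X} {p₁ p₂ : X → ℝ}

lemma klDivR_eq_integral_llr [SigmaFinite Q] [Q.HaveLebesgueDecomposition P₁] (hQ : Q ≪ P₁) :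
    klDivR Q P₁ = ∫ x, llr Q P₁ x ∂Q :=
  integral_rnDeriv_mul_log hQ

lemma toReal_rnDeriv_mul_exp_neg_half_llr_le [SigmaFinite μ] [SigmaFinite P₁] [SigmaFinite P₂]
    [SigmaFinite Q] (h₁m : Measurable p₁) (h₂m : Measurable p₂)
    (h₁0 : ∀ x, 0 ≤ p₁ x) (h₂0 : ∀ x, 0 ≤ p₂ x)
    (hP₁ : P₁ = μ.withDensity fun x => ENNReal.ofReal (p₁ x))
    (hP₂ : P₂ = μ.withDensity fun x => ENNReal.ofReal (p₂ x)) (hQ₁ : Q ≪ P₁) (hQ₂ : Q ≪ P₂) :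
    ∀ᵐ x ∂μ, (Q.rnDeriv μ x).toReal * exp (-(llr Q P₁ x + llr Q P₂ x) / 2)
      ≤ √(p₁ x * p₂ x) := by
  filter_upwards [toReal_rnDeriv_mul_density_ae_eq h₁m h₁0 hP₁ hQ₁,
    toReal_rnDeriv_mul_density_ae_eq h₂m h₂0 hP₂ hQ₂] with x hx₁ hx₂
  exact mul_exp_neg_half_log_add_log_le_sqrt (h₁0 x) (h₂0 x) hx₁ hx₂

theorem exp_neg_half_klDivR_add_le_integral_sqrt_mul [SigmaFinite μ] [IsFiniteMeasure P₁]
    [IsFiniteMeasure P₂] [IsProbabilityMeasure Q] (h₁m : Measurable p₁) (h₂m : Measurable p₂)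
    (h₁0 : ∀ x, 0 ≤ p₁ x) (h₂0 : ∀ x, 0 ≤ p₂ x)
    (hP₁ : P₁ = μ.withDensity fun x => ENNReal.ofReal (p₁ x))
    (hP₂ : P₂ = μ.withDensity fun x => ENNReal.ofReal (p₂ x)) (hQ₁ : Q ≪ P₁) (hQ₂ : Q ≪ P₂)
    (hi₁ : Integrable (llr Q P₁) Q) (hi₂ : Integrable (llr Q P₂) Q)
    (hB : Integrable (fun x => √(p₁ x * p₂ x)) μ) :
    exp (-(klDivR Q P₁ + klDivR Q P₂) / 2) ≤ ∫ x, √(p₁ x * p₂ x) ∂μ := by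
  have hQμ : Q ≪ μ := hQ₁.trans (hP₁ ▸ withDensity_absolutelyContinuous _ _)
  set h : X → ℝ := fun x => -(llr Q P₁ x + llr Q P₂ x) / 2
  have hbound := toReal_rnDeriv_mul_exp_neg_half_llr_le h₁m h₂m h₁0 h₂0 hP₁ hP₂ hQ₁ hQ₂
  have hweighted : Integrable (fun x => (Q.rnDeriv μ x).toReal • exp (h x)) μ := by
    have hm : Measurable h := ((measurable_llr Q P₁).add (measurable_llr Q P₂)).neg.div_const 2
    refine hB.mono'
      ((Measure.measurable_rnDeriv Q μ).ennreal_toReal.mul hm.exp).aestronglyMeasurable ?_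
    filter_upwards [hbound] with x hx
    rwa [Real.norm_of_nonneg (by positivity)]
  calc exp (-(klDivR Q P₁ + klDivR Q P₂) / 2) = exp (∫ x, h x ∂Q) := by
        rw [integral_div, integral_neg, integral_add hi₁ hi₂, klDivR_eq_integral_llr hQ₁,
          klDivR_eq_integral_llr hQ₂]
    _ ≤ ∫ x, exp (h x) ∂Q :=
        convexOn_exp.map_integral_le continuous_exp.continuousOn isClosed_univ
          (.of_forall fun _ => Set.mem_univ _) ((hi₁.add hi₂).neg.div_const 2)
          ((integrable_rnDeriv_smul_iff hQμ).1 hweighted)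
    _ = ∫ x, (Q.rnDeriv μ x).toReal • exp (h x) ∂μ := (integral_rnDeriv_smul hQμ).symm
    _ ≤ ∫ x, √(p₁ x * p₂ x) ∂μ := integral_mono_ae hweighted hB hbound

end KullbackLeibler

/-- reverse Kullback-Leibler, inequality (13): for probability measures
`P₁, P₂` with total variation distance `V`,
`V ≤ √(1 - exp(-inf_Q (D(Q‖P₁) + D(Q‖P₂))))`; since the right-hand side is increasing in
the exponent, the infimum over `Q` is expressed by universally quantifying over
probability measures `Q`. -/
theorem statement12 {X : Type*} [MeasurableSpace X] (μ : Measure X) [SigmaFinite μ]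
    (p₁ p₂ : X → ℝ) (h₁m : Measurable p₁) (h₂m : Measurable p₂)
    (h₁0 : ∀ x, 0 ≤ p₁ x) (h₂0 : ∀ x, 0 ≤ p₂ x)
    (P₁ P₂ : Measure X)
    (hP₁ : P₁ = μ.withDensity fun x => ENNReal.ofReal (p₁ x))
    (hP₂ : P₂ = μ.withDensity fun x => ENNReal.ofReal (p₂ x))
    [IsProbabilityMeasure P₁] [IsProbabilityMeasure P₂]
    (V : ℝ) (hV : V = 2⁻¹ * ∫ x, |p₁ x - p₂ x| ∂μ)
    (Q : Measure X) [IsProbabilityMeasure Q] (hQ₁ : Q ≪ P₁) (hQ₂ : Q ≪ P₂)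
    (hi₁ : Integrable (fun x => (Q.rnDeriv P₁ x).toReal * Real.log (Q.rnDeriv P₁ x).toReal) P₁)
    (hi₂ : Integrable (fun x => (Q.rnDeriv P₂ x).toReal * Real.log (Q.rnDeriv P₂ x).toReal) P₂) :
    V ≤ Real.sqrt (1 - Real.exp (-(klDivR Q P₁ + klDivR Q P₂))) := by
  have hp₁ := integrable_of_isProbabilityMeasure_withDensity h₁m h₁0 hP₁
  have hp₂ := integrable_of_isProbabilityMeasure_withDensity h₂m h₂0 hP₂
  have hLeCam := sq_integral_sqrt_mul_add_sq_le_one hp₁ hp₂ h₁0 h₂0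
    (integral_eq_one_of_isProbabilityMeasure_withDensity h₁m h₁0 hP₁)
    (integral_eq_one_of_isProbabilityMeasure_withDensity h₂m h₂0 hP₂)
  have hJensen := exp_neg_half_klDivR_add_le_integral_sqrt_mul h₁m h₂m h₁0 h₂0 hP₁ hP₂ hQ₁ hQ₂
    ((integrable_rnDeriv_mul_log_iff hQ₁).1 hi₁) ((integrable_rnDeriv_mul_log_iff hQ₂).1 hi₂)
    (integrable_sqrt_mul hp₁ hp₂ h₁0 h₂0)
  have hexp : exp (-(klDivR Q P₁ + klDivR Q P₂))
      = exp (-(klDivR Q P₁ + klDivR Q P₂) / 2) ^ 2 := by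
    rw [← Real.exp_nat_mul]
    ring_nf
  refine (le_abs_self V).trans (Real.abs_le_sqrt ?_)
  rw [hexp, hV]
  nlinarith [pow_le_pow_left₀ (exp_pos _).le hJensen 2]
end
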